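/- arXiv:2006.09297 — 10 statements merged into one kernel-verified Lean document; each statement's English description precedes it below -/
import Mathlib

section
/- The solution map S : μ ↦ u_μ is Fréchet differentiable at μ₀, and for every direction ν ∈ ℝ^P its derivative d_ν u_{μ₀} ∈ V is the unique solution of the sensitivity equation a_{μ₀}(d_ν u_{μ₀}, v) = ∂_μ l_{μ₀}(v)·ν − ∂_μ a_{μ₀}(u_{μ₀}, v)·ν for all v ∈ V, where ∂_μ l_{μ₀}(v)·ν := Σ_ξ (∇θ^l_ξ(μ₀)·ν) l_ξ(v) and ∂_μ a_{μ₀}(u, v)·ν := Σ_ξ (∇θ^a_ξ(μ₀)·ν) a_ξ(u, v). -/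
/-!
Via the Riesz map, the variational equation `a_μ(u_μ, ·) = l_μ` becomes an operator equation
`T_μ u_μ = f_μ` in which `T_μ` and `f_μ` depend differentiably on `μ`, and `T_{μ₀}` is invertible
by Lax–Milgram. Invertible operators form an open set on which inversion is differentiable, so
`u_μ = T_μ⁻¹ f_μ` near `μ₀` is differentiable at `μ₀`; differentiating `T_μ u_μ = f_μ` with the
product rule gives the sensitivity equation, whose solution is unique by coercivity.
-/

open InnerProductSpace ContinuousLinearMap Filter
open scoped Topology

theorem hasFDerivAt_sum_smul_const {E F ι : Type*} [NormedAddCommGroup E] [NormedSpace ℝ E]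
    [NormedAddCommGroup F] [NormedSpace ℝ F] [Fintype ι] {θ : ι → E → ℝ} {Dθ : ι → E →L[ℝ] ℝ}
    {x : E} (hθ : ∀ i, HasFDerivAt (θ i) (Dθ i) x) (A : ι → F) :
    HasFDerivAt (fun y => ∑ i, θ i y • A i) (∑ i, (Dθ i).smulRight (A i)) x :=
  HasFDerivAt.fun_sum fun i _ => (hθ i).smul_const (A i)

section LinearEquation

variable {E X : Type*} [NormedAddCommGroup E] [NormedSpace ℝ E]
  [NormedAddCommGroup X] [NormedSpace ℝ X] [CompleteSpace X]

theorem hasFDerivAt_of_eventually_clm_apply_eq {T : E → X →L[ℝ] X} {f u : E → X}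
    {DT : E →L[ℝ] X →L[ℝ] X} {Df : E →L[ℝ] X} {μ₀ : E}
    (hT : HasFDerivAt T DT μ₀) (hf : HasFDerivAt f Df μ₀) (hT₀ : IsUnit (T μ₀))
    (hsol : ∀ᶠ μ in 𝓝 μ₀, T μ (u μ) = f μ) :
    ∃ D : E →L[ℝ] X, HasFDerivAt u D μ₀ ∧ ∀ ν, T μ₀ (D ν) + DT ν (u μ₀) = Df ν := by
  obtain ⟨x₀, hx₀⟩ := hT₀
  have hunit : ∀ᶠ μ in 𝓝 μ₀, IsUnit (T μ) :=
    hT.continuousAt.eventually (Units.isOpen.mem_nhds (hx₀ ▸ x₀.isUnit))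
  have hu_eq : (fun μ => Ring.inverse (T μ) (f μ)) =ᶠ[𝓝 μ₀] u := by
    filter_upwards [hunit, hsol] with μ hμ hμsol
    rw [← hμsol, ← mul_apply_eq_comp, Ring.inverse_mul_cancel _ hμ, one_apply_eq_self]
  have hinv : HasFDerivAt (fun μ => Ring.inverse (T μ)) _ μ₀ :=
    (hx₀ ▸ hasFDerivAt_ringInverse (𝕜 := ℝ) x₀).comp μ₀ hT
  have hu : HasFDerivAt u _ μ₀ := (hinv.clm_apply hf).congr_of_eventuallyEq hu_eq.symm
  refine ⟨_, hu, fun ν => ?_⟩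
  have hTu : HasFDerivAt f _ μ₀ :=
    (hT.clm_apply hu).congr_of_eventuallyEq (hsol.mono fun _ h => h.symm)
  exact congrArg (· ν) (hTu.unique hf)

end LinearEquation

section LaxMilgram

variable {E V : Type*} [NormedAddCommGroup E] [NormedSpace ℝ E]
  [NormedAddCommGroup V] [InnerProductSpace ℝ V] [CompleteSpace V]

theorem IsCoercive.eq_of_forall_apply_eq {B : V →L[ℝ] V →L[ℝ] ℝ} (hB : IsCoercive B)
    {w w' : V} (h : ∀ v, B w v = B w' v) : w = w' :=
  hB.continuousLinearEquivOfBilin.injective <| ext_inner_right ℝ fun v => by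
    simp only [IsCoercive.continuousLinearEquivOfBilin_apply, h]

theorem hasFDerivAt_of_eventually_bilin_apply_eq {a : E → V →L[ℝ] V →L[ℝ] ℝ} {l : E → V →L[ℝ] ℝ}
    {u : E → V} {Da : E →L[ℝ] V →L[ℝ] V →L[ℝ] ℝ} {Dl : E →L[ℝ] V →L[ℝ] ℝ} {μ₀ : E}
    (ha : HasFDerivAt a Da μ₀) (hl : HasFDerivAt l Dl μ₀) (hcoer : IsCoercive (a μ₀))
    (hsol : ∀ᶠ μ in 𝓝 μ₀, ∀ v, a μ (u μ) v = l μ v) :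
    ∃ D : E →L[ℝ] V, HasFDerivAt u D μ₀ ∧ ∀ ν, a μ₀ (D ν) = Dl ν - Da ν (u μ₀) := by
  set J : (V →L[ℝ] ℝ) →L[ℝ] V := (toDual ℝ V).symm.toContinuousLinearEquiv.toContinuousLinearMap
  have hJ : Function.Injective J := (toDual ℝ V).symm.injective
  -- `S (a μ)` is by definition the Lax–Milgram operator `(a μ)♯`
  set S := compL ℝ V (V →L[ℝ] ℝ) V J
  have hT : HasFDerivAt (fun μ => S (a μ)) (S.comp Da) μ₀ := S.hasFDerivAt.comp (f := a) μ₀ ha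
  have hT₀ : IsUnit (S (a μ₀)) :=
    ((ContinuousLinearEquiv.unitsEquiv ℝ V).symm hcoer.continuousLinearEquivOfBilin).isUnit
  obtain ⟨D, hD, hDeq⟩ := hasFDerivAt_of_eventually_clm_apply_eq hT (J.hasFDerivAt.comp μ₀ hl) hT₀
    (hsol.mono fun μ h => congrArg J (ContinuousLinearMap.ext h))
  refine ⟨D, hD, fun ν => eq_sub_of_add_eq (hJ ?_)⟩
  simpa [S] using hDeq ν

end LaxMilgram

theorem stmt_1_general
    {V : Type*} [NormedAddCommGroup V] [InnerProductSpace ℝ V] [CompleteSpace V]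
    {P na nl : ℕ}
    (A : Fin na → V →L[ℝ] V →L[ℝ] ℝ) (θa : Fin na → EuclideanSpace ℝ (Fin P) → ℝ)
    (L : Fin nl → V →L[ℝ] ℝ) (θl : Fin nl → EuclideanSpace ℝ (Fin P) → ℝ)
    (aμ : EuclideanSpace ℝ (Fin P) → V →L[ℝ] V →L[ℝ] ℝ)
    (haμ : ∀ μ, aμ μ = ∑ ξ : Fin na, θa ξ μ • A ξ)
    (lμ : EuclideanSpace ℝ (Fin P) → V →L[ℝ] ℝ)
    (hlμ : ∀ μ, lμ μ = ∑ ξ : Fin nl, θl ξ μ • L ξ)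
    (μ₀ : EuclideanSpace ℝ (Fin P))
    (Dθa : Fin na → EuclideanSpace ℝ (Fin P) →L[ℝ] ℝ)
    (hDθa : ∀ ξ, HasFDerivAt (θa ξ) (Dθa ξ) μ₀)
    (Dθl : Fin nl → EuclideanSpace ℝ (Fin P) →L[ℝ] ℝ)
    (hDθl : ∀ ξ, HasFDerivAt (θl ξ) (Dθl ξ) μ₀)
    (U : Set (EuclideanSpace ℝ (Fin P))) (hU : U ∈ nhds μ₀)
    (α : ℝ) (hα : 0 < α)
    (ha_coer : ∀ μ ∈ U, ∀ v : V, α * ‖v‖ ^ 2 ≤ aμ μ v v)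
    (u : EuclideanSpace ℝ (Fin P) → V)
    (hu : ∀ μ ∈ U, ∀ v : V, aμ μ (u μ) v = lμ μ v) :
    ∃ D : EuclideanSpace ℝ (Fin P) →L[ℝ] V,
      HasFDerivAt u D μ₀ ∧
      ∀ ν : EuclideanSpace ℝ (Fin P),
        (∀ v : V, aμ μ₀ (D ν) v
            = (∑ ξ : Fin nl, Dθl ξ ν * L ξ v)
              - (∑ ξ : Fin na, Dθa ξ ν * A ξ (u μ₀) v)) ∧
        (∀ w : V,
          (∀ v : V, aμ μ₀ w v
              = (∑ ξ : Fin nl, Dθl ξ ν * L ξ v)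
                - (∑ ξ : Fin na, Dθa ξ ν * A ξ (u μ₀) v)) → w = D ν) := by
  have hcoer : IsCoercive (aμ μ₀) :=
    ⟨α, hα, fun v => by simpa only [mul_assoc, ← sq] using ha_coer μ₀ (mem_of_mem_nhds hU) v⟩
  have ha : HasFDerivAt aμ (∑ ξ, (Dθa ξ).smulRight (A ξ)) μ₀ := by
    rw [funext haμ]
    exact hasFDerivAt_sum_smul_const hDθa A
  have hl : HasFDerivAt lμ (∑ ξ, (Dθl ξ).smulRight (L ξ)) μ₀ := by
    rw [funext hlμ]
    exact hasFDerivAt_sum_smul_const hDθl L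
  obtain ⟨D, hD, hDeq⟩ :=
    hasFDerivAt_of_eventually_bilin_apply_eq ha hl hcoer (eventually_of_mem hU hu)
  have hsens : ∀ ν v, aμ μ₀ (D ν) v
      = (∑ ξ, Dθl ξ ν * L ξ v) - (∑ ξ, Dθa ξ ν * A ξ (u μ₀) v) := fun ν v => by
    simp [hDeq, sum_apply]
  exact ⟨D, hD, fun ν =>
    ⟨hsens ν, fun w hw => hcoer.eq_of_forall_apply_eq fun v => (hw v).trans (hsens ν v).symm⟩⟩

/-- Fréchet differentiability of the solution map `μ ↦ u_μ` at `μ₀`: the derivative in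
direction `ν` is the unique solution `d_ν u_{μ₀} ∈ V` of the sensitivity equation
`a_{μ₀}(d_ν u_{μ₀}, v) = ∂_μ l_{μ₀}(v)·ν − ∂_μ a_{μ₀}(u_{μ₀}, v)·ν` for all `v ∈ V`. -/
theorem stmt_1
    {V : Type*} [NormedAddCommGroup V] [InnerProductSpace ℝ V] [CompleteSpace V]
    {P na nl : ℕ}
    (A : Fin na → V →L[ℝ] V →L[ℝ] ℝ) (θa : Fin na → EuclideanSpace ℝ (Fin P) → ℝ)
    (L : Fin nl → V →L[ℝ] ℝ) (θl : Fin nl → EuclideanSpace ℝ (Fin P) → ℝ)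
    (aμ : EuclideanSpace ℝ (Fin P) → V →L[ℝ] V →L[ℝ] ℝ)
    (haμ : ∀ μ, aμ μ = ∑ ξ : Fin na, θa ξ μ • A ξ)
    (lμ : EuclideanSpace ℝ (Fin P) → V →L[ℝ] ℝ)
    (hlμ : ∀ μ, lμ μ = ∑ ξ : Fin nl, θl ξ μ • L ξ)
    (μ₀ : EuclideanSpace ℝ (Fin P))
    (Dθa : Fin na → EuclideanSpace ℝ (Fin P) →L[ℝ] ℝ)
    (hDθa : ∀ ξ, HasFDerivAt (θa ξ) (Dθa ξ) μ₀)
    (Dθl : Fin nl → EuclideanSpace ℝ (Fin P) →L[ℝ] ℝ)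
    (hDθl : ∀ ξ, HasFDerivAt (θl ξ) (Dθl ξ) μ₀)
    (U : Set (EuclideanSpace ℝ (Fin P))) (hU : U ∈ nhds μ₀)
    (hθa_cont : ∀ ξ, ContinuousOn (θa ξ) U)
    (hθl_cont : ∀ ξ, ContinuousOn (θl ξ) U)
    (α : ℝ) (hα : 0 < α)
    (ha_coer : ∀ μ ∈ U, ∀ v : V, α * ‖v‖ ^ 2 ≤ aμ μ v v)
    (u : EuclideanSpace ℝ (Fin P) → V)
    (hu : ∀ μ ∈ U, ∀ v : V, aμ μ (u μ) v = lμ μ v) :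
    ∃ D : EuclideanSpace ℝ (Fin P) →L[ℝ] V,
      HasFDerivAt u D μ₀ ∧
      ∀ ν : EuclideanSpace ℝ (Fin P),
        (∀ v : V, aμ μ₀ (D ν) v
            = (∑ ξ : Fin nl, Dθl ξ ν * L ξ v)
              - (∑ ξ : Fin na, Dθa ξ ν * A ξ (u μ₀) v)) ∧
        (∀ w : V,
          (∀ v : V, aμ μ₀ w v
              = (∑ ξ : Fin nl, Dθl ξ ν * L ξ v)
                - (∑ ξ : Fin na, Dθa ξ ν * A ξ (u μ₀) v)) → w = D ν) :=
  stmt_1_general A θa L θl aμ haμ lμ hlμ μ₀ Dθa hDθa Dθl hDθl U hU α hα ha_coer u hu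
end

section
/- The dual solution map A : μ ↦ p_μ is Fréchet differentiable at μ₀, and for every direction ν ∈ ℝ^P its derivative d_ν p_{μ₀} ∈ V is the unique solution of a_{μ₀}(q, d_ν p_{μ₀}) = ∂_μ j_{μ₀}(q)·ν + 2 ∂_μ k_{μ₀}(q, u_{μ₀})·ν − ∂_μ a_{μ₀}(q, p_{μ₀})·ν + 2 k_{μ₀}(q, d_ν u_{μ₀}) for all q ∈ V, where d_ν u_{μ₀} ∈ V is the Fréchet derivative of the primal solution map at μ₀ in direction ν (the unique solution of a_{μ₀}(d_ν u_{μ₀}, v) = ∂_μ l_{μ₀}(v)·ν − ∂_μ a_{μ₀}(u_{μ₀}, v)·ν for all v ∈ V), and ∂_μ of a parameter-separable form denotes the sum of the forms' components weighted by the directional derivatives of their coefficient functions. -/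
/-!
Both sensitivity equations are instances of one abstract fact. If `T μ (y μ) = b μ` near `μ₀`,
with `T` and `b` differentiable at `μ₀` and `T μ₀` a topological isomorphism, then `T μ` stays
invertible near `μ₀` and `y μ = (T μ)⁻¹ (b μ)` there; inversion of operators is smooth, so `y` is
differentiable at `μ₀`, and differentiating the identity gives `T μ₀ y' + T' (y μ₀) = b'`.
By Lax–Milgram the coercive form `a_{μ₀}`, seen as a map `V → V'`, and its transpose are
isomorphisms. The primal problem is the equation for `a_μ`; the dual one is the equation for
the transpose, with right-hand side `j_μ + 2 k_μ(·, u_μ)`, differentiable because `u` is.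
Uniqueness of both sensitivities is injectivity of these isomorphisms.
-/

open Filter Topology ContinuousLinearMap

theorem exists_hasFDerivAt_of_eventually_apply_eq {𝕜 E F G : Type*} [NontriviallyNormedField 𝕜]
    [NormedAddCommGroup E] [NormedSpace 𝕜 E] [NormedAddCommGroup F] [NormedSpace 𝕜 F]
    [CompleteSpace F] [NormedAddCommGroup G] [NormedSpace 𝕜 G]
    {T : E → F →L[𝕜] G} {T' : E →L[𝕜] F →L[𝕜] G} {b : E → G} {b' : E →L[𝕜] G} {y : E → F}
    {x₀ : E} (hT : HasFDerivAt T T' x₀) (hb : HasFDerivAt b b' x₀) (hT₀ : (T x₀).IsInvertible)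
    (hy : ∀ᶠ x in 𝓝 x₀, T x (y x) = b x) :
    ∃ y' : E →L[𝕜] F, HasFDerivAt y y' x₀ ∧ ∀ ν, T x₀ (y' ν) + T' ν (y x₀) = b' ν := by
  obtain ⟨e, he⟩ := hT₀
  have hinv : ∀ᶠ x in 𝓝 x₀, (T x).IsInvertible := by
    filter_upwards [hT.continuousAt.preimage_mem_nhds (he ▸ e.nhds)] with x ⟨e', he'⟩
    exact ⟨e', he'⟩
  have hy_inv : y =ᶠ[𝓝 x₀] fun x => (T x).inverse (b x) := by
    filter_upwards [hy, hinv] with x hx hxinv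
    exact (hxinv.inverse_apply_eq.2 hx.symm).symm
  have hdiff : DifferentiableAt 𝕜 (fun x => (T x).inverse) x₀ :=
    ((he ▸ contDiffAt_map_inverse (n := 1) e).differentiableAt one_ne_zero).comp x₀
      hT.differentiableAt
  obtain ⟨y', hy'⟩ : ∃ y', HasFDerivAt y y' x₀ :=
    ⟨_, (hdiff.hasFDerivAt.clm_apply hb).congr_of_eventuallyEq hy_inv⟩
  refine ⟨y', hy', fun ν => ?_⟩
  have hzero : HasFDerivAt (fun x => T x (y x) - b x) (0 : E →L[𝕜] G) x₀ :=
    (hasFDerivAt_const 0 x₀).congr_of_eventuallyEq (hy.mono fun x hx => sub_eq_zero.2 hx)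
  have := congrArg (· ν) (((hT.clm_apply hy').sub hb).unique hzero)
  simpa [sub_eq_zero] using this

theorem hasFDerivAt_of_eq_sum_smul {𝕜 E F ι : Type*} [NontriviallyNormedField 𝕜]
    [NormedAddCommGroup E] [NormedSpace 𝕜 E] [NormedAddCommGroup F] [NormedSpace 𝕜 F]
    [Fintype ι] {θ : ι → E → 𝕜} {Dθ : ι → E →L[𝕜] 𝕜} {g : ι → F} {f : E → F} {x₀ : E}
    (hf : ∀ x, f x = ∑ i, θ i x • g i) (hθ : ∀ i, HasFDerivAt (θ i) (Dθ i) x₀) :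
    HasFDerivAt f (∑ i, (Dθ i).smulRight (g i)) x₀ := by
  rw [funext hf]
  exact HasFDerivAt.fun_sum fun i _ => (hθ i).smul_const (g i)

theorem ContinuousLinearMap.flip_sum {𝕜 E F G ι : Type*} [NontriviallyNormedField 𝕜]
    [SeminormedAddCommGroup E] [NormedSpace 𝕜 E] [SeminormedAddCommGroup F] [NormedSpace 𝕜 F]
    [SeminormedAddCommGroup G] [NormedSpace 𝕜 G] (s : Finset ι) (B : ι → E →L[𝕜] F →L[𝕜] G) :
    (∑ i ∈ s, B i).flip = ∑ i ∈ s, (B i).flip :=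
  map_sum (flipₗᵢ 𝕜 E F G).toLinearEquiv B s

namespace IsCoercive

theorem flip {V : Type*} [NormedAddCommGroup V] [NormedSpace ℝ V] {B : V →L[ℝ] V →L[ℝ] ℝ}
    (hB : IsCoercive B) : IsCoercive B.flip :=
  hB

theorem isInvertible {V : Type*} [NormedAddCommGroup V] [InnerProductSpace ℝ V] [CompleteSpace V]
    {B : V →L[ℝ] V →L[ℝ] ℝ} (hB : IsCoercive B) : B.IsInvertible :=
  ⟨hB.continuousLinearEquivOfBilin.trans (InnerProductSpace.toDual ℝ V).toContinuousLinearEquiv,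
    by ext v w; simp [hB.continuousLinearEquivOfBilin_apply]⟩

end IsCoercive

theorem stmt_2_general
    {V : Type*} [NormedAddCommGroup V] [InnerProductSpace ℝ V] [CompleteSpace V]
    {P na nl nj nk : ℕ}
    (A : Fin na → V →L[ℝ] V →L[ℝ] ℝ) (θa : Fin na → EuclideanSpace ℝ (Fin P) → ℝ)
    (L : Fin nl → V →L[ℝ] ℝ) (θl : Fin nl → EuclideanSpace ℝ (Fin P) → ℝ)
    (Jf : Fin nj → V →L[ℝ] ℝ) (θj : Fin nj → EuclideanSpace ℝ (Fin P) → ℝ)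
    (K : Fin nk → V →L[ℝ] V →L[ℝ] ℝ) (θk : Fin nk → EuclideanSpace ℝ (Fin P) → ℝ)
    (aμ : EuclideanSpace ℝ (Fin P) → V →L[ℝ] V →L[ℝ] ℝ)
    (haμ : ∀ μ, aμ μ = ∑ ξ : Fin na, θa ξ μ • A ξ)
    (lμ : EuclideanSpace ℝ (Fin P) → V →L[ℝ] ℝ)
    (hlμ : ∀ μ, lμ μ = ∑ ξ : Fin nl, θl ξ μ • L ξ)
    (jμ : EuclideanSpace ℝ (Fin P) → V →L[ℝ] ℝ)
    (hjμ : ∀ μ, jμ μ = ∑ ξ : Fin nj, θj ξ μ • Jf ξ)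
    (kμ : EuclideanSpace ℝ (Fin P) → V →L[ℝ] V →L[ℝ] ℝ)
    (hkμ : ∀ μ, kμ μ = ∑ ξ : Fin nk, θk ξ μ • K ξ)
    (μ₀ : EuclideanSpace ℝ (Fin P))
    (Dθa : Fin na → EuclideanSpace ℝ (Fin P) →L[ℝ] ℝ)
    (hDθa : ∀ ξ, HasFDerivAt (θa ξ) (Dθa ξ) μ₀)
    (Dθl : Fin nl → EuclideanSpace ℝ (Fin P) →L[ℝ] ℝ)
    (hDθl : ∀ ξ, HasFDerivAt (θl ξ) (Dθl ξ) μ₀)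
    (Dθj : Fin nj → EuclideanSpace ℝ (Fin P) →L[ℝ] ℝ)
    (hDθj : ∀ ξ, HasFDerivAt (θj ξ) (Dθj ξ) μ₀)
    (Dθk : Fin nk → EuclideanSpace ℝ (Fin P) →L[ℝ] ℝ)
    (hDθk : ∀ ξ, HasFDerivAt (θk ξ) (Dθk ξ) μ₀)
    (U : Set (EuclideanSpace ℝ (Fin P))) (hU : U ∈ nhds μ₀)
    (α : ℝ) (hα : 0 < α)
    (ha_coer : ∀ μ ∈ U, ∀ v : V, α * ‖v‖ ^ 2 ≤ aμ μ v v)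
    (u : EuclideanSpace ℝ (Fin P) → V)
    (hu : ∀ μ ∈ U, ∀ v : V, aμ μ (u μ) v = lμ μ v)
    (p : EuclideanSpace ℝ (Fin P) → V)
    (hp : ∀ μ ∈ U, ∀ v : V, aμ μ v (p μ) = jμ μ v + 2 * kμ μ v (u μ)) :
    ∃ D : EuclideanSpace ℝ (Fin P) →L[ℝ] V,
      HasFDerivAt p D μ₀ ∧
      ∀ ν : EuclideanSpace ℝ (Fin P), ∀ du : V,
        (∀ v : V, aμ μ₀ du v
            = (∑ ξ : Fin nl, Dθl ξ ν * L ξ v)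
              - (∑ ξ : Fin na, Dθa ξ ν * A ξ (u μ₀) v)) →
        ((∀ q : V, aμ μ₀ q (D ν)
            = (∑ ξ : Fin nj, Dθj ξ ν * Jf ξ q)
              + 2 * (∑ ξ : Fin nk, Dθk ξ ν * K ξ q (u μ₀))
              - (∑ ξ : Fin na, Dθa ξ ν * A ξ q (p μ₀))
              + 2 * kμ μ₀ q du) ∧
         (∀ w : V,
            (∀ q : V, aμ μ₀ q w
              = (∑ ξ : Fin nj, Dθj ξ ν * Jf ξ q)
                + 2 * (∑ ξ : Fin nk, Dθk ξ ν * K ξ q (u μ₀))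
                - (∑ ξ : Fin na, Dθa ξ ν * A ξ q (p μ₀))
                + 2 * kμ μ₀ q du) → w = D ν)) := by
  have hμ₀ : μ₀ ∈ U := mem_of_mem_nhds hU
  have hcoer : IsCoercive (aμ μ₀) :=
    ⟨α, hα, fun v => by simpa only [mul_assoc, ← sq] using ha_coer μ₀ hμ₀ v⟩
  have hu_eq : ∀ᶠ μ in 𝓝 μ₀, aμ μ (u μ) = lμ μ :=
    eventually_of_mem hU fun μ hμ => ext (hu μ hμ)
  have hp_eq : ∀ᶠ μ in 𝓝 μ₀, (aμ μ).flip (p μ) = jμ μ + (2 : ℝ) • (kμ μ).flip (u μ) :=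
    eventually_of_mem hU fun μ hμ => ext fun v => by
      simp only [flip_apply, hp μ hμ v, add_apply, smul_apply, smul_eq_mul]
  have ha := hasFDerivAt_of_eq_sum_smul (f := aμ) haμ hDθa
  have hl := hasFDerivAt_of_eq_sum_smul (f := lμ) hlμ hDθl
  have hj := hasFDerivAt_of_eq_sum_smul (f := jμ) hjμ hDθj
  have haμ_flip : ∀ μ, (aμ μ).flip = ∑ ξ : Fin na, θa ξ μ • (A ξ).flip := fun μ => by
    simp only [haμ, flip_sum, flip_smul]
  have hkμ_flip : ∀ μ, (kμ μ).flip = ∑ ξ : Fin nk, θk ξ μ • (K ξ).flip := fun μ => by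
    simp only [hkμ, flip_sum, flip_smul]
  have ha_flip := hasFDerivAt_of_eq_sum_smul (f := fun μ => (aμ μ).flip) haμ_flip hDθa
  have hk_flip := hasFDerivAt_of_eq_sum_smul (f := fun μ => (kμ μ).flip) hkμ_flip hDθk
  obtain ⟨Du, hDu, hDu_eq⟩ := exists_hasFDerivAt_of_eventually_apply_eq ha hl
    hcoer.isInvertible hu_eq
  obtain ⟨Dp, hDp, hDp_eq⟩ := exists_hasFDerivAt_of_eventually_apply_eq ha_flip
    (hj.add ((hk_flip.clm_apply hDu).const_smul (2 : ℝ)))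
    hcoer.flip.isInvertible hp_eq
  refine ⟨Dp, hDp, fun ν du hdu => ?_⟩
  obtain rfl : du = Du ν := hcoer.isInvertible.injective <| ext fun v => by
    have := congr($(hDu_eq ν) v)
    simp only [sum_apply, smulRight_apply, smul_apply, add_apply, smul_eq_mul] at this
    linarith [hdu v]
  have hDp_ν : ∀ q : V, aμ μ₀ q (Dp ν)
      = (∑ ξ : Fin nj, Dθj ξ ν * Jf ξ q) + 2 * (∑ ξ : Fin nk, Dθk ξ ν * K ξ q (u μ₀))
        - (∑ ξ : Fin na, Dθa ξ ν * A ξ q (p μ₀)) + 2 * kμ μ₀ q (Du ν) := fun q => by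
    have := congr($(hDp_eq ν) q)
    simp only [sum_apply, smulRight_apply, smul_apply, add_apply, flip_apply, smul_eq_mul,
      smul_add, comp_apply] at this
    linarith
  refine ⟨hDp_ν, fun w hw => hcoer.flip.isInvertible.injective <| ext fun q => ?_⟩
  simp only [flip_apply, hw q, hDp_ν q]

/-- Fréchet differentiability of the dual solution map `μ ↦ p_μ` at `μ₀`: the derivative
in direction `ν` is the unique solution `d_ν p_{μ₀} ∈ V` of
`a_{μ₀}(q, d_ν p_{μ₀}) = ∂_μ j_{μ₀}(q)·ν + 2 ∂_μ k_{μ₀}(q, u_{μ₀})·ν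
  − ∂_μ a_{μ₀}(q, p_{μ₀})·ν + 2 k_{μ₀}(q, d_ν u_{μ₀})` for all `q ∈ V`, where
`d_ν u_{μ₀}` is the (unique) solution of the primal sensitivity equation. -/
theorem stmt_2
    {V : Type*} [NormedAddCommGroup V] [InnerProductSpace ℝ V] [CompleteSpace V]
    {P na nl nj nk : ℕ}
    (A : Fin na → V →L[ℝ] V →L[ℝ] ℝ) (θa : Fin na → EuclideanSpace ℝ (Fin P) → ℝ)
    (L : Fin nl → V →L[ℝ] ℝ) (θl : Fin nl → EuclideanSpace ℝ (Fin P) → ℝ)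
    (Jf : Fin nj → V →L[ℝ] ℝ) (θj : Fin nj → EuclideanSpace ℝ (Fin P) → ℝ)
    (K : Fin nk → V →L[ℝ] V →L[ℝ] ℝ) (θk : Fin nk → EuclideanSpace ℝ (Fin P) → ℝ)
    (hK_sym : ∀ ξ (v w : V), K ξ v w = K ξ w v)
    (aμ : EuclideanSpace ℝ (Fin P) → V →L[ℝ] V →L[ℝ] ℝ)
    (haμ : ∀ μ, aμ μ = ∑ ξ : Fin na, θa ξ μ • A ξ)
    (lμ : EuclideanSpace ℝ (Fin P) → V →L[ℝ] ℝ)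
    (hlμ : ∀ μ, lμ μ = ∑ ξ : Fin nl, θl ξ μ • L ξ)
    (jμ : EuclideanSpace ℝ (Fin P) → V →L[ℝ] ℝ)
    (hjμ : ∀ μ, jμ μ = ∑ ξ : Fin nj, θj ξ μ • Jf ξ)
    (kμ : EuclideanSpace ℝ (Fin P) → V →L[ℝ] V →L[ℝ] ℝ)
    (hkμ : ∀ μ, kμ μ = ∑ ξ : Fin nk, θk ξ μ • K ξ)
    (μ₀ : EuclideanSpace ℝ (Fin P))
    (Dθa : Fin na → EuclideanSpace ℝ (Fin P) →L[ℝ] ℝ)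
    (hDθa : ∀ ξ, HasFDerivAt (θa ξ) (Dθa ξ) μ₀)
    (Dθl : Fin nl → EuclideanSpace ℝ (Fin P) →L[ℝ] ℝ)
    (hDθl : ∀ ξ, HasFDerivAt (θl ξ) (Dθl ξ) μ₀)
    (Dθj : Fin nj → EuclideanSpace ℝ (Fin P) →L[ℝ] ℝ)
    (hDθj : ∀ ξ, HasFDerivAt (θj ξ) (Dθj ξ) μ₀)
    (Dθk : Fin nk → EuclideanSpace ℝ (Fin P) →L[ℝ] ℝ)
    (hDθk : ∀ ξ, HasFDerivAt (θk ξ) (Dθk ξ) μ₀)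
    (U : Set (EuclideanSpace ℝ (Fin P))) (hU : U ∈ nhds μ₀)
    (hθa_cont : ∀ ξ, ContinuousOn (θa ξ) U) (hθl_cont : ∀ ξ, ContinuousOn (θl ξ) U)
    (hθj_cont : ∀ ξ, ContinuousOn (θj ξ) U) (hθk_cont : ∀ ξ, ContinuousOn (θk ξ) U)
    (α : ℝ) (hα : 0 < α)
    (ha_coer : ∀ μ ∈ U, ∀ v : V, α * ‖v‖ ^ 2 ≤ aμ μ v v)
    (u : EuclideanSpace ℝ (Fin P) → V)
    (hu : ∀ μ ∈ U, ∀ v : V, aμ μ (u μ) v = lμ μ v)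
    (p : EuclideanSpace ℝ (Fin P) → V)
    (hp : ∀ μ ∈ U, ∀ v : V, aμ μ v (p μ) = jμ μ v + 2 * kμ μ v (u μ)) :
    ∃ D : EuclideanSpace ℝ (Fin P) →L[ℝ] V,
      HasFDerivAt p D μ₀ ∧
      ∀ ν : EuclideanSpace ℝ (Fin P), ∀ du : V,
        (∀ v : V, aμ μ₀ du v
            = (∑ ξ : Fin nl, Dθl ξ ν * L ξ v)
              - (∑ ξ : Fin na, Dθa ξ ν * A ξ (u μ₀) v)) →
        ((∀ q : V, aμ μ₀ q (D ν)
            = (∑ ξ : Fin nj, Dθj ξ ν * Jf ξ q)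
              + 2 * (∑ ξ : Fin nk, Dθk ξ ν * K ξ q (u μ₀))
              - (∑ ξ : Fin na, Dθa ξ ν * A ξ q (p μ₀))
              + 2 * kμ μ₀ q du) ∧
         (∀ w : V,
            (∀ q : V, aμ μ₀ q w
              = (∑ ξ : Fin nj, Dθj ξ ν * Jf ξ q)
                + 2 * (∑ ξ : Fin nk, Dθk ξ ν * K ξ q (u μ₀))
                - (∑ ξ : Fin na, Dθa ξ ν * A ξ q (p μ₀))
                + 2 * kμ μ₀ q du) → w = D ν)) :=
  stmt_2_general A θa L θl Jf θj K θk aμ haμ lμ hlμ jμ hjμ kμ hkμ μ₀ Dθa hDθa Dθl hDθl Dθj hDθj Dθk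
    hDθk U hU α hα ha_coer u hu p hp
end

section
/- First-order necessary optimality conditions: let μ̄ ∈ 𝒫 be a local minimizer of Ĵ over 𝒫 (i.e. Ĵ(μ̄) ≤ Ĵ(μ) for all μ ∈ 𝒫 in some neighborhood of μ̄) and set ū := u_{μ̄}. Then there exists a unique Lagrange multiplier p̄ ∈ V satisfying the dual equation a_{μ̄}(v, p̄) = j_{μ̄}(v) + 2 k_{μ̄}(v, ū) for all v ∈ V, and the variational inequality [∇Θ(μ̄) + Σ_ξ ∇θ^j_ξ(μ̄) j_ξ(ū) + Σ_ξ ∇θ^k_ξ(μ̄) k_ξ(ū, ū) + Σ_ξ ∇θ^l_ξ(μ̄) l_ξ(p̄) − Σ_ξ ∇θ^a_ξ(μ̄) a_ξ(ū, p̄)] · (ν − μ̄) ≥ 0 holds for all ν ∈ 𝒫. -/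
/-!
Write `ū = u_μ̄` and let `p̄` solve the adjoint equation (Lax–Milgram for the transposed form).
Because `l_μ(p̄) = a_μ(u_μ, p̄)`, the reduced cost is `Ĵ(μ) = Θ(μ) + ℒ(μ, u_μ, p̄)` with the
Lagrangian `ℒ(μ, u, p) = j_μ(u) + k_μ(u, u) + l_μ(p) - a_μ(u, p)`. Coercivity makes `μ ↦ u_μ`
Lipschitz at `μ̄`, and since the adjoint equation says that `ℒ(μ̄, ·, p̄)` is stationary at `ū`,
`ℒ(μ, u_μ, p̄) - ℒ(μ, ū, p̄) = o(‖μ - μ̄‖)`. Hence `Ĵ` is Fréchet differentiable at `μ̄` with the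
derivative of `μ ↦ Θ(μ) + ℒ(μ, ū, p̄)`, which is the bracket in the variational inequality, and
that inequality is the first-order condition for a local minimum on the convex set `𝒫`.
-/

open Filter Asymptotics Topology

section BilinearForms

variable {V : Type*} [NormedAddCommGroup V] [NormedSpace ℝ V]

noncomputable def lagrangian (a : V →L[ℝ] V →L[ℝ] ℝ) (l j : V →L[ℝ] ℝ) (k : V →L[ℝ] V →L[ℝ] ℝ)
    (u p : V) : ℝ :=
  j u + k u u + l p - a u p

theorem norm_sub_le_of_coercive {a a₀ : V →L[ℝ] V →L[ℝ] ℝ} {f f₀ : V →L[ℝ] ℝ} {u u₀ : V}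
    {α : ℝ} (hα : 0 < α) (hcoer : ∀ v, α * ‖v‖ ^ 2 ≤ a₀ v v)
    (hu₀ : ∀ v, a₀ u₀ v = f₀ v) (hu : ∀ v, a u v = f v) (hsmall : ‖a - a₀‖ ≤ α / 2) :
    ‖u - u₀‖ ≤ 2 / α * (‖f - f₀‖ + ‖u₀‖ * ‖a - a₀‖) := by
  set w := u - u₀
  have hw : a₀ w w = (f - f₀) w - (a - a₀) u₀ w - (a - a₀) w w := by
    simp only [w, map_sub, sub_apply]
    linarith [hu u, hu u₀, hu₀ u, hu₀ u₀]
  have hf := (f - f₀).le_opNorm w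
  have ha₁ := (a - a₀).le_opNorm₂ u₀ w
  have ha₂ := (a - a₀).le_opNorm₂ w w
  rw [Real.norm_eq_abs] at hf ha₁ ha₂
  have key : α / 2 * ‖w‖ ^ 2 ≤ (‖f - f₀‖ + ‖u₀‖ * ‖a - a₀‖) * ‖w‖ := by
    nlinarith [hcoer w, abs_le.1 hf, abs_le.1 ha₁, abs_le.1 ha₂,
      mul_le_mul_of_nonneg_right hsmall (sq_nonneg ‖w‖)]
  rw [div_mul_eq_mul_div, le_div_iff₀ hα]
  rcases (norm_nonneg w).eq_or_lt with hw₀ | hw₀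
  · rw [← hw₀, zero_mul]; positivity
  · nlinarith

/-- The adjoint equation cancels the part of the difference that is linear in `u - u₀`. -/
theorem sub_lagrangian_eq {a a₀ k k₀ : V →L[ℝ] V →L[ℝ] ℝ} {l j j₀ : V →L[ℝ] ℝ} {u u₀ p : V}
    (hu : ∀ v, a u v = l v) (hp : ∀ v, a₀ v p = j₀ v + 2 * k₀ v u₀)
    (hsymm : ∀ v, k₀ u₀ v = k₀ v u₀) :
    j u + k u u - lagrangian a l j k u₀ p =
      (j - j₀) (u - u₀) + (k - k₀) (u - u₀) u + (k - k₀) u₀ (u - u₀) + k₀ (u - u₀) (u - u₀)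
        - (a - a₀) (u - u₀) p := by
  simp only [lagrangian, map_sub, sub_apply]
  linarith [hu p, hp u, hp u₀, hsymm u, hsymm u₀]

theorem abs_sub_lagrangian_le {a a₀ k k₀ : V →L[ℝ] V →L[ℝ] ℝ} {l j j₀ : V →L[ℝ] ℝ}
    {u u₀ p : V} (hu : ∀ v, a u v = l v) (hp : ∀ v, a₀ v p = j₀ v + 2 * k₀ v u₀)
    (hsymm : ∀ v, k₀ u₀ v = k₀ v u₀) :
    |j u + k u u - lagrangian a l j k u₀ p| ≤ ‖u - u₀‖ *
      (‖j - j₀‖ + ‖k - k₀‖ * (‖u‖ + ‖u₀‖) + ‖k₀‖ * ‖u - u₀‖ + ‖a - a₀‖ * ‖p‖) := by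
  rw [sub_lagrangian_eq hu hp hsymm]
  have h₁ := (j - j₀).le_opNorm (u - u₀)
  have h₂ := (k - k₀).le_opNorm₂ (u - u₀) u
  have h₃ := (k - k₀).le_opNorm₂ u₀ (u - u₀)
  have h₄ := k₀.le_opNorm₂ (u - u₀) (u - u₀)
  have h₅ := (a - a₀).le_opNorm₂ (u - u₀) p
  simp only [Real.norm_eq_abs] at h₁ h₂ h₃ h₄ h₅
  refine abs_le.2 ⟨?_, ?_⟩ <;>
    nlinarith [abs_le.1 h₁, abs_le.1 h₂, abs_le.1 h₃, abs_le.1 h₄, abs_le.1 h₅]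

/- Below, the space of bilinear forms is sometimes passed explicitly: unification fails to match
its `ContinuousLinearMap` instances with those derived from `NormedAddCommGroup`. -/

theorem isBigO_sub_of_coercive {ι F : Type*} [Norm F] {l : Filter ι}
    {a : ι → V →L[ℝ] V →L[ℝ] ℝ} {f : ι → V →L[ℝ] ℝ} {u : ι → V} {a₀ : V →L[ℝ] V →L[ℝ] ℝ}
    {f₀ : V →L[ℝ] ℝ} {u₀ : V} {α : ℝ} {g : ι → F} (hα : 0 < α)
    (hcoer : ∀ v, α * ‖v‖ ^ 2 ≤ a₀ v v) (hu₀ : ∀ v, a₀ u₀ v = f₀ v)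
    (hu : ∀ᶠ i in l, ∀ v, a i (u i) v = f i v) (ha : Tendsto a l (𝓝 a₀))
    (haO : (fun i => a i - a₀) =O[l] g) (hfO : (fun i => f i - f₀) =O[l] g) :
    (fun i => u i - u₀) =O[l] g := by
  have hsmall : ∀ᶠ i in l, ‖a i - a₀‖ ≤ α / 2 := by
    filter_upwards [ha.eventually (Metric.closedBall_mem_nhds a₀ (half_pos hα))] with i hi
    rwa [dist_eq_norm (a i) a₀] at hi
  have hbound : (fun i => u i - u₀) =O[l] (fun i => ‖f i - f₀‖ + ‖u₀‖ * ‖a i - a₀‖) :=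
    IsBigO.of_bound (2 / α) <| (hu.and hsmall).mono fun i ⟨hui, hi⟩ => by
      rw [Real.norm_of_nonneg (by positivity)]
      exact norm_sub_le_of_coercive hα hcoer hu₀ hui hi
  exact hbound.trans (hfO.norm_left.add
    ((IsBigO.norm_left (E' := V →L[ℝ] V →L[ℝ] ℝ) haO).const_mul_left ‖u₀‖))

theorem hasFDerivAt_of_hasFDerivAt_lagrangian {E : Type*} [NormedAddCommGroup E]
    [NormedSpace ℝ E] {a k : E → V →L[ℝ] V →L[ℝ] ℝ} {l j : E → V →L[ℝ] ℝ} {u : E → V}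
    {μ₀ : E} {p : V} {α : ℝ} {X : E →L[ℝ] ℝ} (hα : 0 < α)
    (hcoer : ∀ v, α * ‖v‖ ^ 2 ≤ a μ₀ v v) (hu : ∀ᶠ μ in 𝓝 μ₀, ∀ v, a μ (u μ) v = l μ v)
    (hp : ∀ v, a μ₀ v p = j μ₀ v + 2 * k μ₀ v (u μ₀))
    (hsymm : ∀ v, k μ₀ (u μ₀) v = k μ₀ v (u μ₀))
    (ha : DifferentiableAt ℝ a μ₀) (hl : DifferentiableAt ℝ l μ₀)
    (hj : ContinuousAt j μ₀) (hk : ContinuousAt k μ₀)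
    (hL : HasFDerivAt (fun μ => lagrangian (a μ) (l μ) (j μ) (k μ) (u μ₀) p) X μ₀) :
    HasFDerivAt (fun μ => j μ (u μ) + k μ (u μ) (u μ)) X μ₀ := by
  have hw : (fun μ => u μ - u μ₀) =O[𝓝 μ₀] (fun μ => μ - μ₀) :=
    isBigO_sub_of_coercive hα hcoer hu.self_of_nhds hu ha.continuousAt.tendsto
      (HasFDerivAt.isBigO_sub (𝕜 := ℝ) (F := V →L[ℝ] V →L[ℝ] ℝ) ha.hasFDerivAt)
      hl.hasFDerivAt.isBigO_sub
  have hw₀ : Tendsto (fun μ => u μ - u μ₀) (𝓝 μ₀) (𝓝 0) :=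
    hw.trans_tendsto (tendsto_sub_nhds_zero_iff.2 tendsto_id)
  have hε : Tendsto (fun μ => ‖j μ - j μ₀‖ + ‖k μ - k μ₀‖ * (‖u μ‖ + ‖u μ₀‖)
      + ‖k μ₀‖ * ‖u μ - u μ₀‖ + ‖a μ - a μ₀‖ * ‖p‖) (𝓝 μ₀) (𝓝 0) := by
    have hj₀ := tendsto_iff_norm_sub_tendsto_zero.1 hj.tendsto
    have hk₀ := (tendsto_iff_norm_sub_tendsto_zero (E := V →L[ℝ] V →L[ℝ] ℝ)).1 hk.tendsto
    have ha₀ :=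
      (tendsto_iff_norm_sub_tendsto_zero (E := V →L[ℝ] V →L[ℝ] ℝ)).1 ha.continuousAt.tendsto
    have hu' := (tendsto_sub_nhds_zero_iff.1 hw₀).norm
    convert ((hj₀.add (hk₀.mul (hu'.add_const _))).add (hw₀.norm.const_mul _)).add
      (ha₀.mul_const _) using 2
    simp
  have hR : (fun μ => j μ (u μ) + k μ (u μ) (u μ) - lagrangian (a μ) (l μ) (j μ) (k μ) (u μ₀) p)
      =o[𝓝 μ₀] (fun μ => μ - μ₀) := by
    have hprod := hw.norm_norm.mul_isLittleO ((isLittleO_one_iff ℝ).2 hε)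
    simp only [mul_one] at hprod
    refine IsBigO.trans_isLittleO (IsBigO.of_bound 1 ?_) hprod.of_norm_right
    filter_upwards [hu] with μ hμ
    rw [one_mul, Real.norm_eq_abs, Real.norm_of_nonneg (by positivity)]
    exact abs_sub_lagrangian_le hμ hp hsymm
  rw [hasFDerivAt_iff_isLittleO] at hL ⊢
  refine (hR.add hL).congr_left fun μ => ?_
  simp only [lagrangian]
  linear_combination hu.self_of_nhds p

end BilinearForms

theorem IsCoercive.existsUnique_apply_eq {V : Type*} [NormedAddCommGroup V]
    [InnerProductSpace ℝ V] [CompleteSpace V] {B : V →L[ℝ] V →L[ℝ] ℝ} (hB : IsCoercive B)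
    (f : V →L[ℝ] ℝ) : ∃! u, ∀ v, B u v = f v := by
  refine ⟨hB.continuousLinearEquivOfBilin.symm ((InnerProductSpace.toDual ℝ V).symm f),
    fun v => ?_, fun u hu => ?_⟩
  · rw [← hB.continuousLinearEquivOfBilin_apply, ContinuousLinearEquiv.apply_symm_apply,
      InnerProductSpace.toDual_symm_apply]
  · rw [hB.unique_continuousLinearEquivOfBilin (v := u)
      (f := (InnerProductSpace.toDual ℝ V).symm f) fun w => by
        rw [InnerProductSpace.toDual_symm_apply, hu],
      ContinuousLinearEquiv.symm_apply_apply]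

section Separable

variable {ι E : Type*} [Fintype ι] [NormedAddCommGroup E] [NormedSpace ℝ E] {θ : ι → E → ℝ}
  {x : E}

theorem differentiableAt_sum_smul {W : Type*} [NormedAddCommGroup W] [NormedSpace ℝ W]
    (hθ : ∀ ξ, DifferentiableAt ℝ (θ ξ) x) (w : ι → W) :
    DifferentiableAt ℝ (fun μ => ∑ ξ, θ ξ μ • w ξ) x :=
  DifferentiableAt.fun_sum fun ξ _ => (hθ ξ).smul_const (w ξ)

theorem hasFDerivAt_sum_mul_const (hθ : ∀ ξ, DifferentiableAt ℝ (θ ξ) x) (c : ι → ℝ) :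
    HasFDerivAt (fun μ => ∑ ξ, θ ξ μ * c ξ) (∑ ξ, c ξ • fderiv ℝ (θ ξ) x) x :=
  HasFDerivAt.fun_sum fun ξ _ => (hθ ξ).hasFDerivAt.mul_const (c ξ)

end Separable

theorem convex_setOf_forall_le_and_le {ι : Type*} (a b : EuclideanSpace ℝ ι) :
    Convex ℝ {μ : EuclideanSpace ℝ ι | ∀ i, a i ≤ μ i ∧ μ i ≤ b i} := by
  intro x hx y hy s t hs ht hst i
  obtain ⟨hx₁, hx₂⟩ := hx i
  obtain ⟨hy₁, hy₂⟩ := hy i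
  obtain rfl : t = 1 - s := by linarith
  simp only [WithLp.ofLp_add, WithLp.ofLp_smul, Pi.add_apply, Pi.smul_apply, smul_eq_mul]
  constructor <;> nlinarith

theorem isLocalMinOn_of_forall_norm_sub_lt {E : Type*} [SeminormedAddCommGroup E] {f : E → ℝ}
    {s : Set E} {x : E} (h : ∃ ε > (0 : ℝ), ∀ y ∈ s, ‖y - x‖ < ε → f x ≤ f y) :
    IsLocalMinOn f s x := by
  obtain ⟨ε, hε, h⟩ := h
  filter_upwards [inter_mem_nhdsWithin s (Metric.ball_mem_nhds x hε)] with y ⟨hys, hyx⟩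
  exact h y hys (by rwa [Metric.mem_ball, dist_eq_norm] at hyx)

theorem IsLocalMinOn.hasFDerivAt_nonneg_of_convex {E : Type*} [NormedAddCommGroup E]
    [NormedSpace ℝ E] {f : E → ℝ} {f' : E →L[ℝ] ℝ} {s : Set E} {x y : E}
    (h : IsLocalMinOn f s x) (hf : HasFDerivAt f f' x) (hs : Convex ℝ s) (hx : x ∈ s)
    (hy : y ∈ s) : 0 ≤ f' (y - x) :=
  h.hasFDerivWithinAt_nonneg hf.hasFDerivWithinAt
    (sub_mem_posTangentConeAt_of_segment_subset (hs.segment_subset hx hy))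

theorem stmt_3_general
    {V : Type*} [NormedAddCommGroup V] [InnerProductSpace ℝ V] [CompleteSpace V]
    {P : ℕ} (μa μb : EuclideanSpace ℝ (Fin P))
    (Pset : Set (EuclideanSpace ℝ (Fin P)))
    (hPset : Pset = {μ : EuclideanSpace ℝ (Fin P) | ∀ i, μa i ≤ μ i ∧ μ i ≤ μb i})
    {na nl nj nk : ℕ}
    (A : Fin na → V →L[ℝ] V →L[ℝ] ℝ) (θa : Fin na → EuclideanSpace ℝ (Fin P) → ℝ)
    (L : Fin nl → V →L[ℝ] ℝ) (θl : Fin nl → EuclideanSpace ℝ (Fin P) → ℝ)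
    (Jf : Fin nj → V →L[ℝ] ℝ) (θj : Fin nj → EuclideanSpace ℝ (Fin P) → ℝ)
    (K : Fin nk → V →L[ℝ] V →L[ℝ] ℝ) (θk : Fin nk → EuclideanSpace ℝ (Fin P) → ℝ)
    (hK_sym : ∀ ξ (v w : V), K ξ v w = K ξ w v)
    (U : Set (EuclideanSpace ℝ (Fin P))) (hUopen : IsOpen U) (hPU : Pset ⊆ U)
    (hθa : ∀ ξ, ContDiffOn ℝ 1 (θa ξ) U) (hθl : ∀ ξ, ContDiffOn ℝ 1 (θl ξ) U)
    (hθj : ∀ ξ, ContDiffOn ℝ 1 (θj ξ) U) (hθk : ∀ ξ, ContDiffOn ℝ 1 (θk ξ) U)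
    (aμ : EuclideanSpace ℝ (Fin P) → V →L[ℝ] V →L[ℝ] ℝ)
    (haμ : ∀ μ, aμ μ = ∑ ξ : Fin na, θa ξ μ • A ξ)
    (lμ : EuclideanSpace ℝ (Fin P) → V →L[ℝ] ℝ)
    (hlμ : ∀ μ, lμ μ = ∑ ξ : Fin nl, θl ξ μ • L ξ)
    (jμ : EuclideanSpace ℝ (Fin P) → V →L[ℝ] ℝ)
    (hjμ : ∀ μ, jμ μ = ∑ ξ : Fin nj, θj ξ μ • Jf ξ)
    (kμ : EuclideanSpace ℝ (Fin P) → V →L[ℝ] V →L[ℝ] ℝ)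
    (hkμ : ∀ μ, kμ μ = ∑ ξ : Fin nk, θk ξ μ • K ξ)
    (α : EuclideanSpace ℝ (Fin P) → ℝ) (hα : ∀ μ ∈ U, 0 < α μ)
    (ha_coer : ∀ μ ∈ U, ∀ v : V, α μ * ‖v‖ ^ 2 ≤ aμ μ v v)
    (Θ : EuclideanSpace ℝ (Fin P) → ℝ) (hΘ : ContDiffOn ℝ 1 Θ U)
    (u : EuclideanSpace ℝ (Fin P) → V)
    (hu : ∀ μ ∈ U, ∀ v : V, aμ μ (u μ) v = lμ μ v)
    (Jhat : EuclideanSpace ℝ (Fin P) → ℝ)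
    (hJhat : ∀ μ, Jhat μ = Θ μ + jμ μ (u μ) + kμ μ (u μ) (u μ))
    (μbar : EuclideanSpace ℝ (Fin P)) (hμbar : μbar ∈ Pset)
    (hloc : ∃ ε > (0 : ℝ), ∀ μ ∈ Pset, ‖μ - μbar‖ < ε → Jhat μbar ≤ Jhat μ) :
    ∃ pbar : V,
      (∀ v : V, aμ μbar v pbar = jμ μbar v + 2 * kμ μbar v (u μbar)) ∧
      (∀ p' : V,
        (∀ v : V, aμ μbar v p' = jμ μbar v + 2 * kμ μbar v (u μbar)) → p' = pbar) ∧
      (∀ ν ∈ Pset,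
        0 ≤ fderiv ℝ Θ μbar (ν - μbar)
            + (∑ ξ : Fin nj, fderiv ℝ (θj ξ) μbar (ν - μbar) * Jf ξ (u μbar))
            + (∑ ξ : Fin nk, fderiv ℝ (θk ξ) μbar (ν - μbar) * K ξ (u μbar) (u μbar))
            + (∑ ξ : Fin nl, fderiv ℝ (θl ξ) μbar (ν - μbar) * L ξ pbar)
            - (∑ ξ : Fin na, fderiv ℝ (θa ξ) μbar (ν - μbar) * A ξ (u μbar) pbar)) := by
  have hμU : μbar ∈ U := hPU hμbar
  have hdiff : ∀ {n} {θ : Fin n → EuclideanSpace ℝ (Fin P) → ℝ}, (∀ ξ, ContDiffOn ℝ 1 (θ ξ) U) →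
      ∀ ξ, DifferentiableAt ℝ (θ ξ) μbar := fun hθ ξ =>
    ((hθ ξ).contDiffAt (hUopen.mem_nhds hμU)).differentiableAt one_ne_zero
  have hcoer : IsCoercive (aμ μbar).flip :=
    ⟨α μbar, hα μbar hμU, fun v => by simpa [sq, mul_assoc] using ha_coer μbar hμU v⟩
  obtain ⟨pbar, hdual, huniq⟩ :=
    hcoer.existsUnique_apply_eq (jμ μbar + (2 : ℝ) • (kμ μbar).flip (u μbar))
  simp only [ContinuousLinearMap.flip_apply, add_apply, smul_apply, smul_eq_mul] at hdual huniq
  refine ⟨pbar, hdual, huniq, fun ν hν => ?_⟩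
  have ha : DifferentiableAt ℝ aμ μbar := funext haμ ▸ differentiableAt_sum_smul (hdiff hθa) A
  have hl : DifferentiableAt ℝ lμ μbar := funext hlμ ▸ differentiableAt_sum_smul (hdiff hθl) L
  have hj : DifferentiableAt ℝ jμ μbar := funext hjμ ▸ differentiableAt_sum_smul (hdiff hθj) Jf
  have hk : DifferentiableAt ℝ kμ μbar := funext hkμ ▸ differentiableAt_sum_smul (hdiff hθk) K
  have hLagr := (((hasFDerivAt_sum_mul_const (hdiff hθj) fun ξ => Jf ξ (u μbar)).add
    (hasFDerivAt_sum_mul_const (hdiff hθk) fun ξ => K ξ (u μbar) (u μbar))).add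
    (hasFDerivAt_sum_mul_const (hdiff hθl) fun ξ => L ξ pbar)).sub
    (hasFDerivAt_sum_mul_const (hdiff hθa) fun ξ => A ξ (u μbar) pbar)
  have hcost := hasFDerivAt_of_hasFDerivAt_lagrangian (hα μbar hμU) (ha_coer μbar hμU)
    (eventually_of_mem (hUopen.mem_nhds hμU) hu) hdual (fun v => by simp [hkμ, hK_sym]) ha hl
    hj.continuousAt hk.continuousAt (hLagr.congr_of_eventuallyEq (Eventually.of_forall fun μ => by
      simp [lagrangian, haμ, hlμ, hjμ, hkμ]))
  have hJ := (((hΘ.contDiffAt (hUopen.mem_nhds hμU)).differentiableAt one_ne_zero).hasFDerivAt.add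
    hcost).congr_of_eventuallyEq (f₁ := Jhat)
    (Eventually.of_forall fun μ => by simp [hJhat, add_assoc])
  have hmin := (isLocalMinOn_of_forall_norm_sub_lt hloc).hasFDerivAt_nonneg_of_convex hJ
    (hPset ▸ convex_setOf_forall_le_and_le μa μb) hμbar hν
  simp [mul_comm] at hmin ⊢
  linarith

/-- First-order necessary optimality conditions: if `μ̄ ∈ 𝒫` is a local minimizer of the
reduced cost over `𝒫` and `ū := u_{μ̄}`, then there exists a unique Lagrange multiplier
`p̄ ∈ V` solving the dual equation `a_{μ̄}(v, p̄) = j_{μ̄}(v) + 2 k_{μ̄}(v, ū)` for all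
`v ∈ V`, and the variational inequality
`[∇Θ(μ̄) + Σ_ξ ∇θ^j_ξ(μ̄) j_ξ(ū) + Σ_ξ ∇θ^k_ξ(μ̄) k_ξ(ū, ū) + Σ_ξ ∇θ^l_ξ(μ̄) l_ξ(p̄)
 − Σ_ξ ∇θ^a_ξ(μ̄) a_ξ(ū, p̄)] · (ν − μ̄) ≥ 0` holds for all `ν ∈ 𝒫`. -/
theorem stmt_3
    {V : Type*} [NormedAddCommGroup V] [InnerProductSpace ℝ V] [CompleteSpace V]
    {P : ℕ} (μa μb : EuclideanSpace ℝ (Fin P)) (hab : ∀ i, μa i ≤ μb i)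
    (Pset : Set (EuclideanSpace ℝ (Fin P)))
    (hPset : Pset = {μ : EuclideanSpace ℝ (Fin P) | ∀ i, μa i ≤ μ i ∧ μ i ≤ μb i})
    {na nl nj nk : ℕ}
    (A : Fin na → V →L[ℝ] V →L[ℝ] ℝ) (θa : Fin na → EuclideanSpace ℝ (Fin P) → ℝ)
    (L : Fin nl → V →L[ℝ] ℝ) (θl : Fin nl → EuclideanSpace ℝ (Fin P) → ℝ)
    (Jf : Fin nj → V →L[ℝ] ℝ) (θj : Fin nj → EuclideanSpace ℝ (Fin P) → ℝ)
    (K : Fin nk → V →L[ℝ] V →L[ℝ] ℝ) (θk : Fin nk → EuclideanSpace ℝ (Fin P) → ℝ)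
    (hK_sym : ∀ ξ (v w : V), K ξ v w = K ξ w v)
    (U : Set (EuclideanSpace ℝ (Fin P))) (hUopen : IsOpen U) (hPU : Pset ⊆ U)
    (hθa : ∀ ξ, ContDiffOn ℝ 1 (θa ξ) U) (hθl : ∀ ξ, ContDiffOn ℝ 1 (θl ξ) U)
    (hθj : ∀ ξ, ContDiffOn ℝ 1 (θj ξ) U) (hθk : ∀ ξ, ContDiffOn ℝ 1 (θk ξ) U)
    (aμ : EuclideanSpace ℝ (Fin P) → V →L[ℝ] V →L[ℝ] ℝ)
    (haμ : ∀ μ, aμ μ = ∑ ξ : Fin na, θa ξ μ • A ξ)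
    (lμ : EuclideanSpace ℝ (Fin P) → V →L[ℝ] ℝ)
    (hlμ : ∀ μ, lμ μ = ∑ ξ : Fin nl, θl ξ μ • L ξ)
    (jμ : EuclideanSpace ℝ (Fin P) → V →L[ℝ] ℝ)
    (hjμ : ∀ μ, jμ μ = ∑ ξ : Fin nj, θj ξ μ • Jf ξ)
    (kμ : EuclideanSpace ℝ (Fin P) → V →L[ℝ] V →L[ℝ] ℝ)
    (hkμ : ∀ μ, kμ μ = ∑ ξ : Fin nk, θk ξ μ • K ξ)
    (ha_sym : ∀ μ ∈ U, ∀ v w : V, aμ μ v w = aμ μ w v)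
    (α : EuclideanSpace ℝ (Fin P) → ℝ) (hα : ∀ μ ∈ U, 0 < α μ)
    (ha_coer : ∀ μ ∈ U, ∀ v : V, α μ * ‖v‖ ^ 2 ≤ aμ μ v v)
    (Θ : EuclideanSpace ℝ (Fin P) → ℝ) (hΘ : ContDiffOn ℝ 1 Θ U)
    (u : EuclideanSpace ℝ (Fin P) → V)
    (hu : ∀ μ ∈ U, ∀ v : V, aμ μ (u μ) v = lμ μ v)
    (Jhat : EuclideanSpace ℝ (Fin P) → ℝ)
    (hJhat : ∀ μ, Jhat μ = Θ μ + jμ μ (u μ) + kμ μ (u μ) (u μ))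
    (μbar : EuclideanSpace ℝ (Fin P)) (hμbar : μbar ∈ Pset)
    (hloc : ∃ ε > (0 : ℝ), ∀ μ ∈ Pset, ‖μ - μbar‖ < ε → Jhat μbar ≤ Jhat μ) :
    ∃ pbar : V,
      (∀ v : V, aμ μbar v pbar = jμ μbar v + 2 * kμ μbar v (u μbar)) ∧
      (∀ p' : V,
        (∀ v : V, aμ μbar v p' = jμ μbar v + 2 * kμ μbar v (u μbar)) → p' = pbar) ∧
      (∀ ν ∈ Pset,
        0 ≤ fderiv ℝ Θ μbar (ν - μbar)
            + (∑ ξ : Fin nj, fderiv ℝ (θj ξ) μbar (ν - μbar) * Jf ξ (u μbar))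
            + (∑ ξ : Fin nk, fderiv ℝ (θk ξ) μbar (ν - μbar) * K ξ (u μbar) (u μbar))
            + (∑ ξ : Fin nl, fderiv ℝ (θl ξ) μbar (ν - μbar) * L ξ pbar)
            - (∑ ξ : Fin na, fderiv ℝ (θa ξ) μbar (ν - μbar) * A ξ (u μbar) pbar)) :=
  stmt_3_general μa μb Pset hPset A θa L θl Jf θj K θk hK_sym U hUopen hPU hθa hθl hθj hθk aμ haμ lμ
    hlμ jμ hjμ kμ hkμ α hα ha_coer Θ hΘ u hu Jhat hJhat μbar hμbar hloc
end

section
/- Upper bound on the dual model reduction error: ‖p_h − p_r‖ ≤ Δ_du := α⁻¹ (2‖k‖ Δ_pr + ‖r^du(u_r, p_r)‖). -/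
/-!
The errors `u_h - u_r` and `p_h - p_r` solve the primal and dual problems with the residuals
as right-hand sides, the dual one with the extra load `2 k(·, u_h - u_r)`. The stability bound
`‖x‖ ≤ α⁻¹ ‖a x‖` of a coercive form then bounds the primal error by `Δ_pr`, and the dual error
by `α⁻¹ (‖r^du(u_r, p_r)‖ + 2 ‖k‖ ‖u_h - u_r‖)`.
-/

open ContinuousLinearMap

theorem norm_le_inv_mul_opNorm_of_coercive {E : Type*} [SeminormedAddCommGroup E]
    [NormedSpace ℝ E] (a : E →L[ℝ] E →L[ℝ] ℝ) {α : ℝ} (hα : 0 < α)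
    (ha : ∀ v, α * ‖v‖ ^ 2 ≤ a v v) {x : E} {f : E →L[ℝ] ℝ} (hx : a x = f) :
    ‖x‖ ≤ α⁻¹ * ‖f‖ := by
  rw [inv_mul_eq_div, le_div_iff₀' hα]
  rcases (norm_nonneg x).eq_or_lt with hx0 | hx0
  · rw [← hx0, mul_zero]
    exact norm_nonneg f
  · refine le_of_mul_le_mul_right ?_ hx0
    calc α * ‖x‖ * ‖x‖ = α * ‖x‖ ^ 2 := by ring
      _ ≤ f x := hx ▸ ha x
      _ ≤ ‖f‖ * ‖x‖ := (le_abs_self _).trans (f.le_opNorm x)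

theorem stmt_7_general
    {V : Type*} [NormedAddCommGroup V] [InnerProductSpace ℝ V]
    (a : V →L[ℝ] V →L[ℝ] ℝ) (l j : V →L[ℝ] ℝ) (k : V →L[ℝ] V →L[ℝ] ℝ)
    (α : ℝ) (hα : 0 < α)
    (ha_coer : ∀ v : V, α * ‖v‖ ^ 2 ≤ a v v)
    (u_h : V) (hu_h : ∀ v : V, a u_h v = l v)
    (p_h : V) (hp_h : ∀ v : V, a v p_h = j v + 2 * k v u_h)
    (u_r : V)
    (p_r : V) :
    ‖p_h - p_r‖ ≤
      α⁻¹ * (2 * ‖k‖ * (α⁻¹ * ‖l - a u_r‖)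
        + ‖j + (2 : ℝ) • k.flip u_r - a.flip p_r‖) := by
  set r_du := j + (2 : ℝ) • k.flip u_r - a.flip p_r
  have primal_error : a (u_h - u_r) = l - a u_r := by
    ext v; simp [hu_h]
  have dual_error : a.flip (p_h - p_r) = r_du + (2 : ℝ) • k.flip (u_h - u_r) := by
    ext v; simp [r_du, hp_h]; ring
  have primal_bound := norm_le_inv_mul_opNorm_of_coercive a hα ha_coer primal_error
  refine (norm_le_inv_mul_opNorm_of_coercive a.flip hα ha_coer dual_error).trans ?_
  gcongr
  calc ‖r_du + (2 : ℝ) • k.flip (u_h - u_r)‖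
      ≤ ‖r_du‖ + 2 * (‖k.flip‖ * ‖u_h - u_r‖) := by
        grw [norm_add_le, norm_smul, Real.norm_two, le_opNorm]
    _ ≤ 2 * ‖k‖ * (α⁻¹ * ‖l - a u_r‖) + ‖r_du‖ := by
        rw [opNorm_flip]
        linarith [mul_le_mul_of_nonneg_left primal_bound (norm_nonneg k)]

/-- Upper bound on the dual model reduction error:
`‖p_h − p_r‖ ≤ Δ_du := α⁻¹ (2‖k‖ Δ_pr + ‖r^du(u_r, p_r)‖)`, where
`Δ_pr := α⁻¹ ‖r^pr(u_r)‖`, `r^pr(u)[v] := l(v) − a(u, v)` and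
`r^du(u, p)[v] := j(v) + 2k(v, u) − a(v, p)`. -/
theorem stmt_7
    {V : Type*} [NormedAddCommGroup V] [InnerProductSpace ℝ V] [CompleteSpace V]
    (a : V →L[ℝ] V →L[ℝ] ℝ) (l j : V →L[ℝ] ℝ) (k : V →L[ℝ] V →L[ℝ] ℝ)
    (α : ℝ) (hα : 0 < α)
    (ha_sym : ∀ v w : V, a v w = a w v)
    (ha_coer : ∀ v : V, α * ‖v‖ ^ 2 ≤ a v v)
    (hk_sym : ∀ v w : V, k v w = k w v)
    (u_h : V) (hu_h : ∀ v : V, a u_h v = l v)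
    (p_h : V) (hp_h : ∀ v : V, a v p_h = j v + 2 * k v u_h)
    (Vpr Vdu : Submodule ℝ V)
    (hVpr : IsClosed (Vpr : Set V)) (hVdu : IsClosed (Vdu : Set V))
    (u_r : V) (hu_r_mem : u_r ∈ Vpr) (hu_r : ∀ v ∈ Vpr, a u_r v = l v)
    (p_r : V) (hp_r_mem : p_r ∈ Vdu) (hp_r : ∀ q ∈ Vdu, a q p_r = j q + 2 * k q u_r) :
    ‖p_h - p_r‖ ≤
      α⁻¹ * (2 * ‖k‖ * (α⁻¹ * ‖l - a u_r‖)
        + ‖j + (2 : ℝ) • k.flip u_r - a.flip p_r‖) :=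
  stmt_7_general a l j k α hα ha_coer u_h hu_h p_h hp_h u_r p_r
end

section
/- Upper bound on the model reduction error of the standard RB reduced functional: |Ĵ_h − Ĵ_r| ≤ Δ_pr ‖r^du(u_r, p_r)‖ + Δ_pr² ‖k‖ + |r^pr(u_r)[p_r]|. -/
/-! The error `e = u_h - u_r` satisfies `a(e, ·) = r^pr(u_r)`, so coercivity gives `‖e‖ ≤ Δ_pr`.
Expanding the quadratic functional around `u_r` and using `a(e, p_r) = r^pr(u_r)[p_r]`, the
functional error equals `r^du(u_r, p_r)[e] + k(e, e) + r^pr(u_r)[p_r]` exactly; bounding each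
term gives the estimate. -/

section ErrorEstimate

variable {V : Type*} [NormedAddCommGroup V] [NormedSpace ℝ V]

theorem norm_le_inv_mul_opNorm_of_coercive_s8 {a : V →L[ℝ] V →L[ℝ] ℝ} {α : ℝ} (hα : 0 < α)
    (ha_coer : ∀ v : V, α * ‖v‖ ^ 2 ≤ a v v) {e : V} {r : V →L[ℝ] ℝ}
    (hr : ∀ v : V, r v = a e v) : ‖e‖ ≤ α⁻¹ * ‖r‖ := by
  have h : α * ‖e‖ ^ 2 ≤ ‖r‖ * ‖e‖ :=
    calc α * ‖e‖ ^ 2 ≤ a e e := ha_coer e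
      _ = r e := (hr e).symm
      _ ≤ ‖r e‖ := Real.le_norm_self _
      _ ≤ ‖r‖ * ‖e‖ := r.le_opNorm e
  rcases (norm_nonneg e).eq_or_lt with h0 | h0
  · rw [← h0]
    positivity
  · rw [inv_mul_eq_div, le_div_iff₀ hα]
    nlinarith

theorem primal_residual_apply {a : V →L[ℝ] V →L[ℝ] ℝ} {l : V →L[ℝ] ℝ} {u_h : V}
    (hu_h : ∀ v : V, a u_h v = l v) (u v : V) : (l - a u) v = a (u_h - u) v := by
  simp [← hu_h v]

theorem quadratic_functional_sub_eq {a k : V →L[ℝ] V →L[ℝ] ℝ} {l j : V →L[ℝ] ℝ}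
    (hk_sym : ∀ v w : V, k v w = k w v) {u_h : V} (hu_h : ∀ v : V, a u_h v = l v) (u p : V) :
    (j u_h + k u_h u_h) - (j u + k u u) =
      (j + (2 : ℝ) • k.flip u - a.flip p) (u_h - u) + k (u_h - u) (u_h - u) + (l - a u) p := by
  rw [primal_residual_apply hu_h]
  simp only [sub_apply, add_apply, smul_apply, ContinuousLinearMap.flip_apply, map_sub,
    smul_eq_mul]
  linarith [hk_sym u u_h]

end ErrorEstimate

theorem stmt_8_general
    {V : Type*} [NormedAddCommGroup V] [InnerProductSpace ℝ V]
    (a : V →L[ℝ] V →L[ℝ] ℝ) (l j : V →L[ℝ] ℝ) (k : V →L[ℝ] V →L[ℝ] ℝ)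
    (α : ℝ) (hα : 0 < α)
    (ha_coer : ∀ v : V, α * ‖v‖ ^ 2 ≤ a v v)
    (hk_sym : ∀ v w : V, k v w = k w v)
    (u_h : V) (hu_h : ∀ v : V, a u_h v = l v)
    (u_r : V)
    (p_r : V)
    (Θ : ℝ) :
    |(Θ + j u_h + k u_h u_h) - (Θ + j u_r + k u_r u_r)| ≤
      (α⁻¹ * ‖l - a u_r‖) * ‖j + (2 : ℝ) • k.flip u_r - a.flip p_r‖
        + (α⁻¹ * ‖l - a u_r‖) ^ 2 * ‖k‖
        + |(l - a u_r) p_r| := by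
  set e := u_h - u_r
  set rdu := j + (2 : ℝ) • k.flip u_r - a.flip p_r
  have he : ‖e‖ ≤ α⁻¹ * ‖l - a u_r‖ :=
    norm_le_inv_mul_opNorm_of_coercive_s8 hα ha_coer (primal_residual_apply hu_h u_r)
  have hΘ : (Θ + j u_h + k u_h u_h) - (Θ + j u_r + k u_r u_r)
      = (j u_h + k u_h u_h) - (j u_r + k u_r u_r) := by ring
  rw [hΘ, quadratic_functional_sub_eq hk_sym hu_h u_r p_r]
  have hdu : |rdu e| ≤ (α⁻¹ * ‖l - a u_r‖) * ‖rdu‖ :=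
    calc |rdu e| ≤ ‖rdu‖ * ‖e‖ := rdu.le_opNorm e
      _ ≤ (α⁻¹ * ‖l - a u_r‖) * ‖rdu‖ := by rw [mul_comm]; gcongr
  have hk : |k e e| ≤ (α⁻¹ * ‖l - a u_r‖) ^ 2 * ‖k‖ :=
    calc |k e e| ≤ ‖k‖ * ‖e‖ * ‖e‖ := k.le_opNorm₂ e e
      _ ≤ ‖k‖ * (α⁻¹ * ‖l - a u_r‖) * (α⁻¹ * ‖l - a u_r‖) := by gcongr
      _ = (α⁻¹ * ‖l - a u_r‖) ^ 2 * ‖k‖ := by ring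
  calc |rdu e + k e e + (l - a u_r) p_r| ≤ |rdu e| + |k e e| + |(l - a u_r) p_r| :=
        abs_add_three _ _ _
    _ ≤ _ := by gcongr

/-- Upper bound on the model reduction error of the standard RB reduced functional:
`|Ĵ_h − Ĵ_r| ≤ Δ_pr ‖r^du(u_r, p_r)‖ + Δ_pr² ‖k‖ + |r^pr(u_r)[p_r]|`. -/
theorem stmt_8
    {V : Type*} [NormedAddCommGroup V] [InnerProductSpace ℝ V] [CompleteSpace V]
    (a : V →L[ℝ] V →L[ℝ] ℝ) (l j : V →L[ℝ] ℝ) (k : V →L[ℝ] V →L[ℝ] ℝ)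
    (α : ℝ) (hα : 0 < α)
    (ha_sym : ∀ v w : V, a v w = a w v)
    (ha_coer : ∀ v : V, α * ‖v‖ ^ 2 ≤ a v v)
    (hk_sym : ∀ v w : V, k v w = k w v)
    (u_h : V) (hu_h : ∀ v : V, a u_h v = l v)
    (Vpr Vdu : Submodule ℝ V)
    (hVpr : IsClosed (Vpr : Set V)) (hVdu : IsClosed (Vdu : Set V))
    (u_r : V) (hu_r_mem : u_r ∈ Vpr) (hu_r : ∀ v ∈ Vpr, a u_r v = l v)
    (p_r : V) (hp_r_mem : p_r ∈ Vdu) (hp_r : ∀ q ∈ Vdu, a q p_r = j q + 2 * k q u_r)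
    (Θ : ℝ) :
    |(Θ + j u_h + k u_h u_h) - (Θ + j u_r + k u_r u_r)| ≤
      (α⁻¹ * ‖l - a u_r‖) * ‖j + (2 : ℝ) • k.flip u_r - a.flip p_r‖
        + (α⁻¹ * ‖l - a u_r‖) ^ 2 * ‖k‖
        + |(l - a u_r) p_r| :=
  stmt_8_general a l j k α hα ha_coer hk_sym u_h hu_h u_r p_r Θ
end

section
/- Upper bound on the model reduction error of the NCD-corrected RB reduced functional: |Ĵ_h − Ĵ_r^c| ≤ Δ_pr ‖r^du(u_r, p_r)‖ + Δ_pr² ‖k‖. -/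
/-! Write `e := u_h - u_r`. Since `a e = r^pr(u_r)`, coercivity gives `‖e‖ ≤ Δ_pr`. Expanding the
quadratic functional around `u_r` and using `l (p_r) = a u_h p_r`, the error `Ĵ_h - Ĵ_r^c` equals
exactly `r^du(u_r, p_r)[e] + k(e, e)`, which is bounded by `Δ_pr ‖r^du‖ + Δ_pr² ‖k‖`. -/

section

variable {V : Type*} [NormedAddCommGroup V] [NormedSpace ℝ V]

theorem norm_le_inv_mul_norm_apply_of_coercive {a : V →L[ℝ] V →L[ℝ] ℝ} {α : ℝ} (hα : 0 < α)
    (ha_coer : ∀ v : V, α * ‖v‖ ^ 2 ≤ a v v) (v : V) : ‖v‖ ≤ α⁻¹ * ‖a v‖ := by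
  rw [le_inv_mul_iff₀ hα]
  rcases (norm_nonneg v).eq_or_lt with hv | hv
  · rw [← hv, mul_zero]
    exact norm_nonneg _
  · refine le_of_mul_le_mul_right ?_ hv
    calc α * ‖v‖ * ‖v‖ = α * ‖v‖ ^ 2 := by ring
      _ ≤ a v v := ha_coer v
      _ ≤ ‖a v v‖ := Real.le_norm_self _
      _ ≤ ‖a v‖ * ‖v‖ := (a v).le_opNorm v

theorem apply_self_sub_apply_self_of_symm {k : V →L[ℝ] V →L[ℝ] ℝ} (hk_sym : ∀ v w : V, k v w = k w v)
    (u w : V) : k u u - k w w = 2 * k (u - w) w + k (u - w) (u - w) := by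
  simp only [map_sub, sub_apply, hk_sym w u]
  ring

theorem abs_apply_add_apply_self_le (r : V →L[ℝ] ℝ) (k : V →L[ℝ] V →L[ℝ] ℝ) {e : V} {Δ : ℝ}
    (he : ‖e‖ ≤ Δ) : |r e + k e e| ≤ Δ * ‖r‖ + Δ ^ 2 * ‖k‖ := by
  have hΔ : 0 ≤ Δ := (norm_nonneg e).trans he
  calc |r e + k e e| ≤ ‖r e‖ + ‖k e e‖ := abs_add_le _ _
    _ ≤ ‖r‖ * ‖e‖ + ‖k‖ * ‖e‖ * ‖e‖ := add_le_add (r.le_opNorm e) (k.le_opNorm₂ e e)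
    _ ≤ ‖r‖ * Δ + ‖k‖ * Δ * Δ := by gcongr
    _ = Δ * ‖r‖ + Δ ^ 2 * ‖k‖ := by ring

end

theorem stmt_9_general
    {V : Type*} [NormedAddCommGroup V] [InnerProductSpace ℝ V]
    (a : V →L[ℝ] V →L[ℝ] ℝ) (l j : V →L[ℝ] ℝ) (k : V →L[ℝ] V →L[ℝ] ℝ)
    (α : ℝ) (hα : 0 < α)
    (ha_coer : ∀ v : V, α * ‖v‖ ^ 2 ≤ a v v)
    (hk_sym : ∀ v w : V, k v w = k w v)
    (u_h : V) (hu_h : ∀ v : V, a u_h v = l v)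
    (u_r : V)
    (p_r : V)
    (Θ : ℝ) :
    |(Θ + j u_h + k u_h u_h) - ((Θ + j u_r + k u_r u_r) + (l p_r - a u_r p_r))| ≤
      (α⁻¹ * ‖l - a u_r‖) * ‖j + (2 : ℝ) • k.flip u_r - a.flip p_r‖
        + (α⁻¹ * ‖l - a u_r‖) ^ 2 * ‖k‖ := by
  have hres : a (u_h - u_r) = l - a u_r := by
    ext v
    simp only [map_sub, sub_apply, hu_h]
  have herr : ‖u_h - u_r‖ ≤ α⁻¹ * ‖l - a u_r‖ :=
    hres ▸ norm_le_inv_mul_norm_apply_of_coercive hα ha_coer _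
  have hj : j (u_h - u_r) = j u_h - j u_r := map_sub j u_h u_r
  have ha : a (u_h - u_r) p_r = l p_r - a u_r p_r := by rw [hres, sub_apply]
  have hk := apply_self_sub_apply_self_of_symm hk_sym u_h u_r
  have key : (Θ + j u_h + k u_h u_h) - ((Θ + j u_r + k u_r u_r) + (l p_r - a u_r p_r))
      = (j + (2 : ℝ) • k.flip u_r - a.flip p_r) (u_h - u_r) + k (u_h - u_r) (u_h - u_r) := by
    simp only [sub_apply, add_apply, smul_apply, ContinuousLinearMap.flip_apply, smul_eq_mul]
    linarith
  rw [key]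
  exact abs_apply_add_apply_self_le _ k herr

/-- Upper bound on the model reduction error of the NCD-corrected RB reduced functional:
`|Ĵ_h − Ĵ_r^c| ≤ Δ_pr ‖r^du(u_r, p_r)‖ + Δ_pr² ‖k‖`, where
`Ĵ_r^c := Ĵ_r + r^pr(u_r)[p_r]`. -/
theorem stmt_9
    {V : Type*} [NormedAddCommGroup V] [InnerProductSpace ℝ V] [CompleteSpace V]
    (a : V →L[ℝ] V →L[ℝ] ℝ) (l j : V →L[ℝ] ℝ) (k : V →L[ℝ] V →L[ℝ] ℝ)
    (α : ℝ) (hα : 0 < α)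
    (ha_sym : ∀ v w : V, a v w = a w v)
    (ha_coer : ∀ v : V, α * ‖v‖ ^ 2 ≤ a v v)
    (hk_sym : ∀ v w : V, k v w = k w v)
    (u_h : V) (hu_h : ∀ v : V, a u_h v = l v)
    (Vpr Vdu : Submodule ℝ V)
    (hVpr : IsClosed (Vpr : Set V)) (hVdu : IsClosed (Vdu : Set V))
    (u_r : V) (hu_r_mem : u_r ∈ Vpr) (hu_r : ∀ v ∈ Vpr, a u_r v = l v)
    (p_r : V) (hp_r_mem : p_r ∈ Vdu) (hp_r : ∀ q ∈ Vdu, a q p_r = j q + 2 * k q u_r)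
    (Θ : ℝ) :
    |(Θ + j u_h + k u_h u_h) - ((Θ + j u_r + k u_r u_r) + (l p_r - a u_r p_r))| ≤
      (α⁻¹ * ‖l - a u_r‖) * ‖j + (2 : ℝ) • k.flip u_r - a.flip p_r‖
        + (α⁻¹ * ‖l - a u_r‖) ^ 2 * ‖k‖ :=
  stmt_9_general a l j k α hα ha_coer hk_sym u_h hu_h u_r p_r Θ
end

section
/- Exact error representation for the NCD-corrected RB reduced functional: with e := u_h − u_r, it holds that Ĵ_h − Ĵ_r^c = r^du(u_r, p_r)[e] + k(e, e). -/
/-! Since `u_h` solves the primal equation, the correction term `r^pr(u_r)[p_r]` equals `a(e, p_r)`;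
expanding the symmetric quadratic term around `u_r` gives
`k(u_h, u_h) = k(u_r, u_r) + 2 k(e, u_r) + k(e, e)`; the rest is linearity of `j`. -/

theorem ContinuousLinearMap.apply_self_eq_of_symm {𝕜 E : Type*} [NontriviallyNormedField 𝕜]
    [SeminormedAddCommGroup E] [NormedSpace 𝕜 E]
    (k : E →L[𝕜] E →L[𝕜] 𝕜) (hk : ∀ v w, k v w = k w v) (x y : E) :
    k x x = k y y + 2 * k (x - y) y + k (x - y) (x - y) := by
  simp only [map_sub, sub_apply]
  linear_combination hk y x

theorem stmt_10_general
    {V : Type*} [NormedAddCommGroup V] [InnerProductSpace ℝ V]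
    (a : V →L[ℝ] V →L[ℝ] ℝ) (l j : V →L[ℝ] ℝ) (k : V →L[ℝ] V →L[ℝ] ℝ)
    (hk_sym : ∀ v w : V, k v w = k w v)
    (u_h : V) (hu_h : ∀ v : V, a u_h v = l v)
    (u_r p_r : V) (Θ : ℝ) :
    (Θ + j u_h + k u_h u_h) - ((Θ + j u_r + k u_r u_r) + (l p_r - a u_r p_r)) =
      (j (u_h - u_r) + 2 * k (u_h - u_r) u_r - a (u_h - u_r) p_r)
        + k (u_h - u_r) (u_h - u_r) := by
  have galerkin : l p_r - a u_r p_r = a (u_h - u_r) p_r := by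
    rw [← hu_h, map_sub, sub_apply]
  rw [galerkin, map_sub j]
  linear_combination k.apply_self_eq_of_symm hk_sym u_h u_r

/-- Exact error representation for the NCD-corrected RB reduced functional:
with `e := u_h − u_r`, it holds `Ĵ_h − Ĵ_r^c = r^du(u_r, p_r)[e] + k(e, e)`. -/
theorem stmt_10
    {V : Type*} [NormedAddCommGroup V] [InnerProductSpace ℝ V] [CompleteSpace V]
    (a : V →L[ℝ] V →L[ℝ] ℝ) (l j : V →L[ℝ] ℝ) (k : V →L[ℝ] V →L[ℝ] ℝ)
    (α : ℝ) (hα : 0 < α)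
    (ha_sym : ∀ v w : V, a v w = a w v)
    (ha_coer : ∀ v : V, α * ‖v‖ ^ 2 ≤ a v v)
    (hk_sym : ∀ v w : V, k v w = k w v)
    (u_h : V) (hu_h : ∀ v : V, a u_h v = l v)
    (u_r p_r : V) (Θ : ℝ) :
    (Θ + j u_h + k u_h u_h) - ((Θ + j u_r + k u_r u_r) + (l p_r - a u_r p_r)) =
      (j (u_h - u_r) + 2 * k (u_h - u_r) u_r - a (u_h - u_r) p_r)
        + k (u_h - u_r) (u_h - u_r) :=
  stmt_10_general a l j k hk_sym u_h hu_h u_r p_r Θ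
end

section
/- Upper bound on the model reduction error of the inexact (standard-RB) gradient component: with g_r := dΘ + dj(u_r) + dk(u_r, u_r) + dl(p_r) − da(u_r, p_r), it holds that |g_h − g_r| ≤ 2 Δ_pr ‖u_r‖ ‖dk‖ + Δ_pr (‖dj‖ + ‖da‖ ‖p_r‖) + Δ_du (‖dl‖ + ‖da‖ ‖u_r‖) + Δ_pr Δ_du ‖da‖ + Δ_pr² ‖dk‖. -/
/-!
Write `e = u_h - u_r` and `f = p_h - p_r`. Testing the primal equation with `e` and the dual
equation with `f` turns coercivity into `α‖e‖² ≤ r^pr(u_r)[e]` and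
`α‖f‖² ≤ r^du(u_r, p_r)[f] + 2 k(f, e)`, whence `‖e‖ ≤ Δ_pr` and `‖f‖ ≤ Δ_du`.
Since `dk` is symmetric, the gradient difference expands into the terms
`dj(e) + dk(e, e) + 2 dk(e, u_r) + dl(f) - da(e, p_r) - da(u_r, f) - da(e, f)`,
each of which is bounded by the operator norms and the two error bounds.
-/

section ErrorBounds

variable {E : Type*} [NormedAddCommGroup E] [NormedSpace ℝ E]
  (a : E →L[ℝ] E →L[ℝ] ℝ) {α : ℝ}

theorem norm_le_inv_mul_of_coercive (hα : 0 < α) {x : E} (hcoer : α * ‖x‖ ^ 2 ≤ a x x)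
    {C : ℝ} (hC : 0 ≤ C) (hbound : a x x ≤ C * ‖x‖) : ‖x‖ ≤ α⁻¹ * C := by
  rcases (norm_nonneg x).eq_or_lt with hx | hx
  · rw [← hx]; positivity
  · rw [le_inv_mul_iff₀ hα]
    nlinarith

theorem norm_sub_le_of_coercive_primal (hα : 0 < α) (hcoer : ∀ v, α * ‖v‖ ^ 2 ≤ a v v)
    (l : E →L[ℝ] ℝ) {u_h : E} (hu_h : ∀ v, a u_h v = l v) (u_r : E) :
    ‖u_h - u_r‖ ≤ α⁻¹ * ‖l - a u_r‖ := by
  set e := u_h - u_r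
  have hres : a e e = (l - a u_r) e := by
    simp only [e, map_sub, sub_apply, hu_h]
  refine norm_le_inv_mul_of_coercive a hα (hcoer e) (norm_nonneg _) ?_
  rw [hres]
  exact (le_abs_self _).trans ((l - a u_r).le_opNorm e)

theorem norm_sub_le_of_coercive_dual (hα : 0 < α) (hcoer : ∀ v, α * ‖v‖ ^ 2 ≤ a v v)
    (j : E →L[ℝ] ℝ) (k : E →L[ℝ] E →L[ℝ] ℝ) {u_h p_h : E}
    (hp_h : ∀ v, a v p_h = j v + 2 * k v u_h) (u_r p_r : E) :
    ‖p_h - p_r‖ ≤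
      α⁻¹ * (2 * ‖k‖ * ‖u_h - u_r‖ + ‖j + (2 : ℝ) • k.flip u_r - a.flip p_r‖) := by
  set f := p_h - p_r
  set r := j + (2 : ℝ) • k.flip u_r - a.flip p_r
  have hres : a f f = r f + 2 * k f (u_h - u_r) := by
    simp only [r, f, map_sub, hp_h, sub_apply, add_apply,
      smul_apply, ContinuousLinearMap.flip_apply, smul_eq_mul]
    ring
  have hr : r f ≤ ‖r‖ * ‖f‖ := (le_abs_self _).trans (r.le_opNorm f)
  have hk : k f (u_h - u_r) ≤ ‖k‖ * ‖f‖ * ‖u_h - u_r‖ :=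
    (le_abs_self _).trans (k.le_opNorm₂ f _)
  refine norm_le_inv_mul_of_coercive a hα (hcoer f) (by positivity) ?_
  rw [hres]
  linarith

end ErrorBounds

section GradientPerturbation

variable {E : Type*} [NormedAddCommGroup E] [NormedSpace ℝ E]
  (dΘ : ℝ) (dl dj : E →L[ℝ] ℝ) (da dk : E →L[ℝ] E →L[ℝ] ℝ)

noncomputable def gradientComponent (u p : E) : ℝ :=
  dΘ + dj u + dk u u + dl p - da u p

theorem gradientComponent_sub_eq (hdk : ∀ v w, dk v w = dk w v) (u p u' p' : E) :
    gradientComponent dΘ dl dj da dk u p - gradientComponent dΘ dl dj da dk u' p' =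
      dj (u - u') + dk (u - u') (u - u') + 2 * dk (u - u') u' + dl (p - p')
        - (da (u - u') p' + da u' (p - p') + da (u - u') (p - p')) := by
  simp only [gradientComponent, map_sub, sub_apply]
  rw [hdk u' u]
  ring

theorem abs_gradientComponent_sub_le (hdk : ∀ v w, dk v w = dk w v) {u p u' p' : E}
    {εu εp : ℝ} (hu : ‖u - u'‖ ≤ εu) (hp : ‖p - p'‖ ≤ εp) :
    |gradientComponent dΘ dl dj da dk u p - gradientComponent dΘ dl dj da dk u' p'| ≤
      2 * εu * ‖u'‖ * ‖dk‖ + εu * (‖dj‖ + ‖da‖ * ‖p'‖) + εp * (‖dl‖ + ‖da‖ * ‖u'‖)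
        + εu * εp * ‖da‖ + εu ^ 2 * ‖dk‖ := by
  rw [gradientComponent_sub_eq dΘ dl dj da dk hdk]
  have hu' : ‖u'‖ ≤ ‖u'‖ := le_rfl
  have hp' : ‖p'‖ ≤ ‖p'‖ := le_rfl
  have b₁ := abs_le.mp (dj.le_opNorm_of_le hu)
  have b₂ := abs_le.mp (dk.le_of_opNorm₂_le_of_le le_rfl hu hu)
  have b₃ := abs_le.mp (dk.le_of_opNorm₂_le_of_le le_rfl hu hu')
  have b₄ := abs_le.mp (dl.le_opNorm_of_le hp)
  have b₅ := abs_le.mp (da.le_of_opNorm₂_le_of_le le_rfl hu hp')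
  have b₆ := abs_le.mp (da.le_of_opNorm₂_le_of_le le_rfl hu' hp)
  have b₇ := abs_le.mp (da.le_of_opNorm₂_le_of_le le_rfl hu hp)
  rw [abs_le]
  constructor <;> linarith

end GradientPerturbation

theorem stmt_11_general
    {V : Type*} [NormedAddCommGroup V] [InnerProductSpace ℝ V]
    (a : V →L[ℝ] V →L[ℝ] ℝ) (l j : V →L[ℝ] ℝ) (k : V →L[ℝ] V →L[ℝ] ℝ)
    (α : ℝ) (hα : 0 < α)
    (ha_coer : ∀ v : V, α * ‖v‖ ^ 2 ≤ a v v)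
    (u_h : V) (hu_h : ∀ v : V, a u_h v = l v)
    (p_h : V) (hp_h : ∀ v : V, a v p_h = j v + 2 * k v u_h)
    (u_r : V) (p_r : V)
    (dΘ : ℝ) (dl dj : V →L[ℝ] ℝ) (da dk : V →L[ℝ] V →L[ℝ] ℝ)
    (hdk_sym : ∀ v w : V, dk v w = dk w v) :
    |(dΘ + dj u_h + dk u_h u_h + dl p_h - da u_h p_h)
        - (dΘ + dj u_r + dk u_r u_r + dl p_r - da u_r p_r)| ≤
      2 * (α⁻¹ * ‖l - a u_r‖) * ‖u_r‖ * ‖dk‖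
        + (α⁻¹ * ‖l - a u_r‖) * (‖dj‖ + ‖da‖ * ‖p_r‖)
        + (α⁻¹ * (2 * ‖k‖ * (α⁻¹ * ‖l - a u_r‖)
            + ‖j + (2 : ℝ) • k.flip u_r - a.flip p_r‖)) * (‖dl‖ + ‖da‖ * ‖u_r‖)
        + (α⁻¹ * ‖l - a u_r‖)
          * (α⁻¹ * (2 * ‖k‖ * (α⁻¹ * ‖l - a u_r‖)
              + ‖j + (2 : ℝ) • k.flip u_r - a.flip p_r‖)) * ‖da‖
        + (α⁻¹ * ‖l - a u_r‖) ^ 2 * ‖dk‖ := by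
  have hu := norm_sub_le_of_coercive_primal a hα ha_coer l hu_h u_r
  have hp : ‖p_h - p_r‖ ≤ α⁻¹ * (2 * ‖k‖ * (α⁻¹ * ‖l - a u_r‖)
      + ‖j + (2 : ℝ) • k.flip u_r - a.flip p_r‖) :=
    (norm_sub_le_of_coercive_dual a hα ha_coer j k hp_h u_r p_r).trans (by gcongr)
  exact abs_gradientComponent_sub_le dΘ dl dj da dk hdk_sym hu hp

/-- Upper bound on the model reduction error of the inexact (standard-RB) gradient
component: with `g_r := dΘ + dj(u_r) + dk(u_r, u_r) + dl(p_r) − da(u_r, p_r)`,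
`|g_h − g_r| ≤ 2 Δ_pr ‖u_r‖ ‖dk‖ + Δ_pr (‖dj‖ + ‖da‖ ‖p_r‖) + Δ_du (‖dl‖ + ‖da‖ ‖u_r‖)
 + Δ_pr Δ_du ‖da‖ + Δ_pr² ‖dk‖`. -/
theorem stmt_11
    {V : Type*} [NormedAddCommGroup V] [InnerProductSpace ℝ V] [CompleteSpace V]
    (a : V →L[ℝ] V →L[ℝ] ℝ) (l j : V →L[ℝ] ℝ) (k : V →L[ℝ] V →L[ℝ] ℝ)
    (α : ℝ) (hα : 0 < α)
    (ha_sym : ∀ v w : V, a v w = a w v)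
    (ha_coer : ∀ v : V, α * ‖v‖ ^ 2 ≤ a v v)
    (hk_sym : ∀ v w : V, k v w = k w v)
    (u_h : V) (hu_h : ∀ v : V, a u_h v = l v)
    (p_h : V) (hp_h : ∀ v : V, a v p_h = j v + 2 * k v u_h)
    (Vpr Vdu : Submodule ℝ V)
    (hVpr : IsClosed (Vpr : Set V)) (hVdu : IsClosed (Vdu : Set V))
    (u_r : V) (hu_r_mem : u_r ∈ Vpr) (hu_r : ∀ v ∈ Vpr, a u_r v = l v)
    (p_r : V) (hp_r_mem : p_r ∈ Vdu) (hp_r : ∀ q ∈ Vdu, a q p_r = j q + 2 * k q u_r)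
    (dΘ : ℝ) (dl dj : V →L[ℝ] ℝ) (da dk : V →L[ℝ] V →L[ℝ] ℝ)
    (hdk_sym : ∀ v w : V, dk v w = dk w v) :
    |(dΘ + dj u_h + dk u_h u_h + dl p_h - da u_h p_h)
        - (dΘ + dj u_r + dk u_r u_r + dl p_r - da u_r p_r)| ≤
      2 * (α⁻¹ * ‖l - a u_r‖) * ‖u_r‖ * ‖dk‖
        + (α⁻¹ * ‖l - a u_r‖) * (‖dj‖ + ‖da‖ * ‖p_r‖)
        + (α⁻¹ * (2 * ‖k‖ * (α⁻¹ * ‖l - a u_r‖)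
            + ‖j + (2 : ℝ) • k.flip u_r - a.flip p_r‖)) * (‖dl‖ + ‖da‖ * ‖u_r‖)
        + (α⁻¹ * ‖l - a u_r‖)
          * (α⁻¹ * (2 * ‖k‖ * (α⁻¹ * ‖l - a u_r‖)
              + ‖j + (2 : ℝ) • k.flip u_r - a.flip p_r‖)) * ‖da‖
        + (α⁻¹ * ‖l - a u_r‖) ^ 2 * ‖dk‖ :=
  stmt_11_general a l j k α hα ha_coer u_h hu_h p_h hp_h u_r p_r dΘ dl dj da dk hdk_sym
end

section
/- Upper bound on the model reduction error of the adjoint-based gradient component of the NCD-corrected functional: with g_r^c := dΘ + dj(u_r) + dk(u_r, u_r) + dl(p_r + w_r) − da(u_r, p_r + w_r) − (dj(z_r) + 2dk(z_r, u_r) − da(z_r, p_r)), it holds that |g_h − g_r^c| ≤ 2 Δ_pr ‖u_r‖ ‖dk‖ + Δ_pr (‖dj‖ + ‖da‖ ‖p_r‖) + Δ_du (‖dl‖ + ‖da‖ ‖u_r‖) + Δ_pr Δ_du ‖da‖ + Δ_pr² ‖dk‖ + (‖dl‖ + ‖da‖ ‖u_r‖) α⁻¹ (‖r^du(u_r, p_r)‖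 + 2‖k‖ α⁻¹ ‖r^pr(u_r)‖) + α⁻¹ ‖r^pr(u_r)‖ (‖dj‖ + 2‖dk‖ ‖u_r‖ + ‖da‖ ‖p_r‖). -/
/-!
Write `e := u_h - u_r` and `ε := p_h - p_r`. Expanding `g_h - g_r^c` bilinearly leaves only
terms containing one of `e`, `ε`, `w_r`, `z_r` as a factor. Each of these four vectors `x`
satisfies an energy identity `a x x = f x` whose right-hand side `f` is the primal residual
(for `e` and `z_r`), or the dual residual perturbed by `2 k` applied to `e` or `z_r` (for `ε`
and `w_r`); coercivity turns this into `‖x‖ ≤ α⁻¹ ‖f‖`, so `‖e‖, ‖z_r‖ ≤ Δ_pr` and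
`‖ε‖, ‖w_r‖ ≤ Δ_du`.
-/

open ContinuousLinearMap

section Coercive

variable {V : Type*} [SeminormedAddCommGroup V] [NormedSpace ℝ V]
  {a : V →L[ℝ] V →L[ℝ] ℝ} {α : ℝ}

theorem norm_le_inv_mul_norm_of_coercive (hα : 0 < α) (ha : ∀ v : V, α * ‖v‖ ^ 2 ≤ a v v)
    {f : V →L[ℝ] ℝ} {x : V} (hx : a x x = f x) : ‖x‖ ≤ α⁻¹ * ‖f‖ := by
  rw [le_inv_mul_iff₀ hα]
  rcases (norm_nonneg x).eq_or_lt with hx0 | hx0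
  · rw [← hx0, mul_zero]
    exact norm_nonneg f
  · refine le_of_mul_le_mul_right ?_ hx0
    calc α * ‖x‖ * ‖x‖ = α * ‖x‖ ^ 2 := by ring
      _ ≤ f x := hx ▸ ha x
      _ ≤ ‖f‖ * ‖x‖ := (Real.le_norm_self _).trans (f.le_opNorm x)

variable (hα : 0 < α) (ha : ∀ v : V, α * ‖v‖ ^ 2 ≤ a v v) {l j : V →L[ℝ] ℝ}
  {k : V →L[ℝ] V →L[ℝ] ℝ} {u_h u_r p_h p_r : V}
include hα ha

theorem norm_primal_error_le (hu_h : ∀ v, a u_h v = l v) :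
    ‖u_h - u_r‖ ≤ α⁻¹ * ‖l - a u_r‖ :=
  norm_le_inv_mul_norm_of_coercive hα ha (by simp [hu_h])

theorem norm_primal_correction_le {W : Submodule ℝ V} {z : V} (hz_mem : z ∈ W)
    (hz : ∀ q ∈ W, a z q = -(l q - a u_r q)) :
    ‖z‖ ≤ α⁻¹ * ‖l - a u_r‖ := by
  rw [← norm_neg (l - a u_r)]
  exact norm_le_inv_mul_norm_of_coercive hα ha (by simp [hz z hz_mem])

theorem norm_le_inv_mul_of_coercive_of_add {f g : V →L[ℝ] ℝ} {x : V} {C : ℝ}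
    (hx : a x x = (g + f) x) (hg : ‖g‖ ≤ C) : ‖x‖ ≤ α⁻¹ * (C + ‖f‖) :=
  (norm_le_inv_mul_norm_of_coercive hα ha hx).trans
    (mul_le_mul_of_nonneg_left ((norm_add_le g f).trans (by gcongr)) (inv_nonneg.2 hα.le))

theorem norm_dual_error_le (hu_h : ∀ v, a u_h v = l v)
    (hp_h : ∀ v, a v p_h = j v + 2 * k v u_h) :
    ‖p_h - p_r‖ ≤ α⁻¹ * (2 * ‖k‖ * (α⁻¹ * ‖l - a u_r‖)
      + ‖j + (2 : ℝ) • k.flip u_r - a.flip p_r‖) := by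
  refine norm_le_inv_mul_of_coercive_of_add hα ha (g := (2 : ℝ) • k.flip (u_h - u_r)) ?_ ?_
  · simp only [map_sub, sub_apply, hp_h, add_apply, smul_apply, flip_apply, smul_eq_mul]
    ring
  · rw [norm_smul, Real.norm_two, mul_assoc, ← opNorm_flip k]
    gcongr
    exact (le_opNorm _ _).trans (by gcongr; exact norm_primal_error_le hα ha hu_h)

theorem norm_dual_correction_le {Wpr Wdu : Submodule ℝ V} {z w : V} (hz_mem : z ∈ Wdu)
    (hz : ∀ q ∈ Wdu, a z q = -(l q - a u_r q)) (hw_mem : w ∈ Wpr)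
    (hw : ∀ v ∈ Wpr, a v w = (j v + 2 * k v u_r - a v p_r) - 2 * k z v) :
    ‖w‖ ≤ α⁻¹ * (2 * ‖k‖ * (α⁻¹ * ‖l - a u_r‖)
      + ‖j + (2 : ℝ) • k.flip u_r - a.flip p_r‖) := by
  refine norm_le_inv_mul_of_coercive_of_add hα ha (g := -(2 : ℝ) • k z) ?_ ?_
  · simp only [hw w hw_mem, add_apply, smul_apply, smul_eq_mul, neg_mul, sub_apply, flip_apply]
    ring
  · rw [norm_smul, norm_neg, Real.norm_two, mul_assoc]
    gcongr
    exact (le_opNorm _ _).trans (by gcongr; exact norm_primal_correction_le hα ha hz_mem hz)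

end Coercive

section GradientError

variable {V : Type*} [SeminormedAddCommGroup V] [NormedSpace ℝ V]
  (dl dj : V →L[ℝ] ℝ) (da dk : V →L[ℝ] V →L[ℝ] ℝ)

theorem corrected_gradient_error_eq (dΘ : ℝ) (u_h u_r p_h p_r w z : V) :
    (dΘ + dj u_h + dk u_h u_h + dl p_h - da u_h p_h)
        - (dΘ + dj u_r + dk u_r u_r + dl (p_r + w) - da u_r (p_r + w)
            - (dj z + 2 * dk z u_r - da z p_r))
      = (dj (u_h - u_r) + dk (u_h - u_r) u_r + dk u_r (u_h - u_r)
          + dk (u_h - u_r) (u_h - u_r) - da (u_h - u_r) p_r)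
        + (dl - da u_r) (p_h - p_r - w) - da (u_h - u_r) (p_h - p_r)
        + (dj z + 2 * dk z u_r - da z p_r) := by
  simp only [map_sub, map_add, sub_apply]
  ring

theorem norm_corrected_gradient_error_le (u p e ε w z : V) {Δ D : ℝ} (he : ‖e‖ ≤ Δ)
    (hε : ‖ε‖ ≤ D) (hw : ‖w‖ ≤ D) (hz : ‖z‖ ≤ Δ) :
    ‖(dj e + dk e u + dk u e + dk e e - da e p) + (dl - da u) (ε - w) - da e ε
        + (dj z + 2 * dk z u - da z p)‖
      ≤ Δ * (‖dj‖ + ‖da‖ * ‖p‖) + 2 * Δ * ‖u‖ * ‖dk‖ + Δ ^ 2 * ‖dk‖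
        + 2 * D * (‖dl‖ + ‖da‖ * ‖u‖) + Δ * D * ‖da‖
        + Δ * (‖dj‖ + 2 * ‖dk‖ * ‖u‖ + ‖da‖ * ‖p‖) := by
  have h₁ : ‖dj e + dk e u + dk u e + dk e e - da e p‖
      ≤ ‖e‖ * (‖dj‖ + ‖da‖ * ‖p‖) + 2 * ‖e‖ * ‖u‖ * ‖dk‖ + ‖e‖ ^ 2 * ‖dk‖ := by
    refine (norm_sub_le _ _).trans ((add_le_add_left norm_add₄_le _).trans ?_)
    linarith [dj.le_opNorm e, dk.le_opNorm₂ e u, dk.le_opNorm₂ u e, dk.le_opNorm₂ e e,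
      da.le_opNorm₂ e p]
  have h₂ : ‖(dl - da u) (ε - w)‖ ≤ (‖dl‖ + ‖da‖ * ‖u‖) * (‖ε‖ + ‖w‖) := by
    refine (le_opNorm _ _).trans ?_
    gcongr
    · exact (norm_sub_le _ _).trans (by gcongr; exact da.le_opNorm u)
    · exact norm_sub_le _ _
  have h₃ : ‖dj z + 2 * dk z u - da z p‖ ≤ ‖z‖ * (‖dj‖ + 2 * ‖dk‖ * ‖u‖ + ‖da‖ * ‖p‖) := by
    refine (norm_sub_le _ _).trans ((add_le_add_left (norm_add_le _ _) _).trans ?_)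
    rw [norm_mul, Real.norm_two]
    linarith [dj.le_opNorm z, dk.le_opNorm₂ z u, da.le_opNorm₂ z p]
  calc _ ≤ ‖dj e + dk e u + dk u e + dk e e - da e p‖ + ‖(dl - da u) (ε - w)‖
          + ‖da e ε‖ + ‖dj z + 2 * dk z u - da z p‖ :=
        (norm_add_le _ _).trans (by gcongr; exact norm_sub_le_of_le (norm_add_le _ _) le_rfl)
    _ ≤ (‖e‖ * (‖dj‖ + ‖da‖ * ‖p‖) + 2 * ‖e‖ * ‖u‖ * ‖dk‖ + ‖e‖ ^ 2 * ‖dk‖)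
          + (‖dl‖ + ‖da‖ * ‖u‖) * (‖ε‖ + ‖w‖) + ‖da‖ * ‖e‖ * ‖ε‖
          + ‖z‖ * (‖dj‖ + 2 * ‖dk‖ * ‖u‖ + ‖da‖ * ‖p‖) := by
        gcongr
        exact da.le_opNorm₂ e ε
    _ ≤ (Δ * (‖dj‖ + ‖da‖ * ‖p‖) + 2 * Δ * ‖u‖ * ‖dk‖ + Δ ^ 2 * ‖dk‖)
          + (‖dl‖ + ‖da‖ * ‖u‖) * (D + D) + ‖da‖ * Δ * D
          + Δ * (‖dj‖ + 2 * ‖dk‖ * ‖u‖ + ‖da‖ * ‖p‖) := by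
        have hΔ : 0 ≤ Δ := (norm_nonneg e).trans he
        gcongr
    _ = _ := by ring

end GradientError

theorem stmt_12_general
    {V : Type*} [NormedAddCommGroup V] [InnerProductSpace ℝ V]
    (a : V →L[ℝ] V →L[ℝ] ℝ) (l j : V →L[ℝ] ℝ) (k : V →L[ℝ] V →L[ℝ] ℝ)
    (α : ℝ) (hα : 0 < α)
    (ha_coer : ∀ v : V, α * ‖v‖ ^ 2 ≤ a v v)
    (u_h : V) (hu_h : ∀ v : V, a u_h v = l v)
    (p_h : V) (hp_h : ∀ v : V, a v p_h = j v + 2 * k v u_h)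
    (Vpr Vdu : Submodule ℝ V)
    (u_r : V)
    (p_r : V)
    (z_r : V) (hz_r_mem : z_r ∈ Vdu)
    (hz_r : ∀ q ∈ Vdu, a z_r q = -(l q - a u_r q))
    (w_r : V) (hw_r_mem : w_r ∈ Vpr)
    (hw_r : ∀ v ∈ Vpr, a v w_r = (j v + 2 * k v u_r - a v p_r) - 2 * k z_r v)
    (dΘ : ℝ) (dl dj : V →L[ℝ] ℝ) (da dk : V →L[ℝ] V →L[ℝ] ℝ) :
    |(dΘ + dj u_h + dk u_h u_h + dl p_h - da u_h p_h)
        - (dΘ + dj u_r + dk u_r u_r + dl (p_r + w_r) - da u_r (p_r + w_r)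
            - (dj z_r + 2 * dk z_r u_r - da z_r p_r))| ≤
      2 * (α⁻¹ * ‖l - a u_r‖) * ‖u_r‖ * ‖dk‖
        + (α⁻¹ * ‖l - a u_r‖) * (‖dj‖ + ‖da‖ * ‖p_r‖)
        + (α⁻¹ * (2 * ‖k‖ * (α⁻¹ * ‖l - a u_r‖)
            + ‖j + (2 : ℝ) • k.flip u_r - a.flip p_r‖)) * (‖dl‖ + ‖da‖ * ‖u_r‖)
        + (α⁻¹ * ‖l - a u_r‖)
          * (α⁻¹ * (2 * ‖k‖ * (α⁻¹ * ‖l - a u_r‖)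
              + ‖j + (2 : ℝ) • k.flip u_r - a.flip p_r‖)) * ‖da‖
        + (α⁻¹ * ‖l - a u_r‖) ^ 2 * ‖dk‖
        + (‖dl‖ + ‖da‖ * ‖u_r‖) * α⁻¹
          * (‖j + (2 : ℝ) • k.flip u_r - a.flip p_r‖ + 2 * ‖k‖ * α⁻¹ * ‖l - a u_r‖)
        + α⁻¹ * ‖l - a u_r‖ * (‖dj‖ + 2 * ‖dk‖ * ‖u_r‖ + ‖da‖ * ‖p_r‖) := by
  rw [corrected_gradient_error_eq, ← Real.norm_eq_abs]
  refine (norm_corrected_gradient_error_le dl dj da dk u_r p_r _ _ w_r z_r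
    (norm_primal_error_le hα ha_coer hu_h)
    (norm_dual_error_le hα ha_coer hu_h hp_h)
    (norm_dual_correction_le hα ha_coer hz_r_mem hz_r hw_r_mem hw_r)
    (norm_primal_correction_le hα ha_coer hz_r_mem hz_r)).trans_eq ?_
  ring

/-- Upper bound on the model reduction error of the adjoint-based gradient component of
the NCD-corrected functional. -/
theorem stmt_12
    {V : Type*} [NormedAddCommGroup V] [InnerProductSpace ℝ V] [CompleteSpace V]
    (a : V →L[ℝ] V →L[ℝ] ℝ) (l j : V →L[ℝ] ℝ) (k : V →L[ℝ] V →L[ℝ] ℝ)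
    (α : ℝ) (hα : 0 < α)
    (ha_sym : ∀ v w : V, a v w = a w v)
    (ha_coer : ∀ v : V, α * ‖v‖ ^ 2 ≤ a v v)
    (hk_sym : ∀ v w : V, k v w = k w v)
    (u_h : V) (hu_h : ∀ v : V, a u_h v = l v)
    (p_h : V) (hp_h : ∀ v : V, a v p_h = j v + 2 * k v u_h)
    (Vpr Vdu : Submodule ℝ V)
    (hVpr : IsClosed (Vpr : Set V)) (hVdu : IsClosed (Vdu : Set V))
    (u_r : V) (hu_r_mem : u_r ∈ Vpr) (hu_r : ∀ v ∈ Vpr, a u_r v = l v)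
    (p_r : V) (hp_r_mem : p_r ∈ Vdu) (hp_r : ∀ q ∈ Vdu, a q p_r = j q + 2 * k q u_r)
    (z_r : V) (hz_r_mem : z_r ∈ Vdu)
    (hz_r : ∀ q ∈ Vdu, a z_r q = -(l q - a u_r q))
    (w_r : V) (hw_r_mem : w_r ∈ Vpr)
    (hw_r : ∀ v ∈ Vpr, a v w_r = (j v + 2 * k v u_r - a v p_r) - 2 * k z_r v)
    (dΘ : ℝ) (dl dj : V →L[ℝ] ℝ) (da dk : V →L[ℝ] V →L[ℝ] ℝ)
    (hdk_sym : ∀ v w : V, dk v w = dk w v) :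
    |(dΘ + dj u_h + dk u_h u_h + dl p_h - da u_h p_h)
        - (dΘ + dj u_r + dk u_r u_r + dl (p_r + w_r) - da u_r (p_r + w_r)
            - (dj z_r + 2 * dk z_r u_r - da z_r p_r))| ≤
      2 * (α⁻¹ * ‖l - a u_r‖) * ‖u_r‖ * ‖dk‖
        + (α⁻¹ * ‖l - a u_r‖) * (‖dj‖ + ‖da‖ * ‖p_r‖)
        + (α⁻¹ * (2 * ‖k‖ * (α⁻¹ * ‖l - a u_r‖)
            + ‖j + (2 : ℝ) • k.flip u_r - a.flip p_r‖)) * (‖dl‖ + ‖da‖ * ‖u_r‖)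
        + (α⁻¹ * ‖l - a u_r‖)
          * (α⁻¹ * (2 * ‖k‖ * (α⁻¹ * ‖l - a u_r‖)
              + ‖j + (2 : ℝ) • k.flip u_r - a.flip p_r‖)) * ‖da‖
        + (α⁻¹ * ‖l - a u_r‖) ^ 2 * ‖dk‖
        + (‖dl‖ + ‖da‖ * ‖u_r‖) * α⁻¹
          * (‖j + (2 : ℝ) • k.flip u_r - a.flip p_r‖ + 2 * ‖k‖ * α⁻¹ * ‖l - a u_r‖)
        + α⁻¹ * ‖l - a u_r‖ * (‖dj‖ + 2 * ‖dk‖ * ‖u_r‖ + ‖da‖ * ‖p_r‖) :=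
  stmt_12_general a l j k α hα ha_coer u_h hu_h p_h hp_h Vpr Vdu u_r p_r z_r hz_r_mem hz_r w_r
    hw_r_mem hw_r dΘ dl dj da dk
end

section
/- Equivalence of the adjoint-based and sensitivity-based representations of the gradient of the NCD-corrected RB reduced functional: r^pr(u_r)[dp_r] + r^du(u_r, p_r)[du_r] = dl(w_r) − da(u_r, w_r) − (dj(z_r) + 2dk(z_r, u_r) − da(z_r, p_r)); consequently the gradient component dΘ + dj(u_r) + dk(u_r, u_r) + dl(p_r) − da(u_r, p_r) + r^pr(u_r)[dp_r] + r^du(u_r, p_r)[du_r] computed via sensitivities coincides with the adjoint-based component dΘ + dj(u_r) + dk(u_r, u_r) + dl(p_r + w_r) − da(u_r, p_r + w_r) − (dj(z_r) + 2dk(z_r, u_r) − da(z_r, p_r)). -/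
theorem stmt_14_general
    {V : Type*} [NormedAddCommGroup V] [InnerProductSpace ℝ V]
    (a : V →L[ℝ] V →L[ℝ] ℝ) (l j : V →L[ℝ] ℝ) (k : V →L[ℝ] V →L[ℝ] ℝ)
    (Vpr Vdu : Submodule ℝ V)
    (u_r : V)
    (p_r : V)
    (dΘ : ℝ) (dl dj : V →L[ℝ] ℝ) (da dk : V →L[ℝ] V →L[ℝ] ℝ)
    (z_r : V) (hz_r_mem : z_r ∈ Vdu)
    (hz_r : ∀ q ∈ Vdu, a z_r q = -(l q - a u_r q))
    (w_r : V) (hw_r_mem : w_r ∈ Vpr)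
    (hw_r : ∀ v ∈ Vpr, a v w_r = (j v + 2 * k v u_r - a v p_r) - 2 * k z_r v)
    (du_r : V) (hdu_r_mem : du_r ∈ Vpr)
    (hdu_r : ∀ v ∈ Vpr, a du_r v = dl v - da u_r v)
    (dp_r : V) (hdp_r_mem : dp_r ∈ Vdu)
    (hdp_r : ∀ q ∈ Vdu, a q dp_r = dj q + 2 * dk q u_r - da q p_r + 2 * k q du_r) :
    (l dp_r - a u_r dp_r) + (j du_r + 2 * k du_r u_r - a du_r p_r)
      = dl w_r - da u_r w_r - (dj z_r + 2 * dk z_r u_r - da z_r p_r) ∧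
    dΘ + dj u_r + dk u_r u_r + dl p_r - da u_r p_r
        + (l dp_r - a u_r dp_r) + (j du_r + 2 * k du_r u_r - a du_r p_r)
      = dΘ + dj u_r + dk u_r u_r + dl (p_r + w_r) - da u_r (p_r + w_r)
          - (dj z_r + 2 * dk z_r u_r - da z_r p_r) := by
  -- Evaluate `a z_r dp_r` and `a du_r w_r` through the equations of both of their arguments;
  -- the coupling terms `2 k(z_r, du_r)` produced by the two pairings cancel.
  have primal_residual_at_dp_r :
      l dp_r - a u_r dp_r = -(dj z_r + 2 * dk z_r u_r - da z_r p_r + 2 * k z_r du_r) := by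
    rw [← hdp_r z_r hz_r_mem, hz_r dp_r hdp_r_mem, neg_neg]
  have dual_residual_at_du_r :
      j du_r + 2 * k du_r u_r - a du_r p_r = dl w_r - da u_r w_r + 2 * k z_r du_r := by
    rw [← hdu_r w_r hw_r_mem, hw_r du_r hdu_r_mem, sub_add_cancel]
  have sensitivity_eq_adjoint :
      (l dp_r - a u_r dp_r) + (j du_r + 2 * k du_r u_r - a du_r p_r)
        = dl w_r - da u_r w_r - (dj z_r + 2 * dk z_r u_r - da z_r p_r) := by
    rw [primal_residual_at_dp_r, dual_residual_at_du_r]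
    ring
  refine ⟨sensitivity_eq_adjoint, ?_⟩
  rw [map_add, map_add]
  linarith

/-- Equivalence of the adjoint-based and sensitivity-based representations of the
gradient of the NCD-corrected RB reduced functional. -/
theorem stmt_14
    {V : Type*} [NormedAddCommGroup V] [InnerProductSpace ℝ V] [CompleteSpace V]
    (a : V →L[ℝ] V →L[ℝ] ℝ) (l j : V →L[ℝ] ℝ) (k : V →L[ℝ] V →L[ℝ] ℝ)
    (α : ℝ) (hα : 0 < α)
    (ha_sym : ∀ v w : V, a v w = a w v)
    (ha_coer : ∀ v : V, α * ‖v‖ ^ 2 ≤ a v v)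
    (hk_sym : ∀ v w : V, k v w = k w v)
    (Vpr Vdu : Submodule ℝ V)
    (hVpr : IsClosed (Vpr : Set V)) (hVdu : IsClosed (Vdu : Set V))
    (u_r : V) (hu_r_mem : u_r ∈ Vpr)
    (p_r : V) (hp_r_mem : p_r ∈ Vdu)
    (dΘ : ℝ) (dl dj : V →L[ℝ] ℝ) (da dk : V →L[ℝ] V →L[ℝ] ℝ)
    (hdk_sym : ∀ v w : V, dk v w = dk w v)
    (z_r : V) (hz_r_mem : z_r ∈ Vdu)
    (hz_r : ∀ q ∈ Vdu, a z_r q = -(l q - a u_r q))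
    (w_r : V) (hw_r_mem : w_r ∈ Vpr)
    (hw_r : ∀ v ∈ Vpr, a v w_r = (j v + 2 * k v u_r - a v p_r) - 2 * k z_r v)
    (du_r : V) (hdu_r_mem : du_r ∈ Vpr)
    (hdu_r : ∀ v ∈ Vpr, a du_r v = dl v - da u_r v)
    (dp_r : V) (hdp_r_mem : dp_r ∈ Vdu)
    (hdp_r : ∀ q ∈ Vdu, a q dp_r = dj q + 2 * dk q u_r - da q p_r + 2 * k q du_r) :
    (l dp_r - a u_r dp_r) + (j du_r + 2 * k du_r u_r - a du_r p_r)
      = dl w_r - da u_r w_r - (dj z_r + 2 * dk z_r u_r - da z_r p_r) ∧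
    dΘ + dj u_r + dk u_r u_r + dl p_r - da u_r p_r
        + (l dp_r - a u_r dp_r) + (j du_r + 2 * k du_r u_r - a du_r p_r)
      = dΘ + dj u_r + dk u_r u_r + dl (p_r + w_r) - da u_r (p_r + w_r)
          - (dj z_r + 2 * dk z_r u_r - da z_r p_r) :=
  stmt_14_general a l j k Vpr Vdu u_r p_r dΘ dl dj da dk z_r hz_r_mem hz_r w_r hw_r_mem hw_r du_r
    hdu_r_mem hdu_r dp_r hdp_r_mem hdp_r
end
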